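/- arXiv:1410.4378 — 7 statements merged into one kernel-verified Lean document; each statement's English description precedes it below -/
import Mathlib

section
/- Let U ⊆ H be a subset and set −H∖−U = {−m : m ∈ H, m ∉ U} ⊆ ℤ^r. Let C = {(f(P))_{P ∈ (𝔽_q^*)^r} : f ∈ 𝔽_q<U>} ⊆ 𝔽_q^{(q−1)^r} be the toric code obtained by evaluating at all torus points. Then the orthogonal complement of C with respect to the standard bilinear form (a ⋆ b = Σ_l a_l b_l) is exactly {(g(P))_{P ∈ (𝔽_q^*)^r} : g ∈ 𝔽_q<−H∖−U>}; i.e., the dual code of C is the toric code of −H∖−U. -/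
open scoped BigOperators

/-- Evaluation of a Laurent polynomial (given by its finitely supported coefficient
function on exponent vectors in `ℤ^r`) at a point of the torus `(Kˣ)^r`. -/
noncomputable def laurentEval {K : Type} [Field K] {r : ℕ}
    (f : (Fin r → ℤ) →₀ K) (P : Fin r → Kˣ) : K :=
  ∑ u ∈ f.support, f u * ∏ i, ((P i ^ u i : Kˣ) : K)

/-- The hypercube `H = {0, 1, …, q-2}^r ⊂ ℤ^r`. -/
def Hset (q r : ℕ) : Set (Fin r → ℤ) := {m | ∀ i, 0 ≤ m i ∧ m i ≤ (q : ℤ) - 2}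

/-!
The monomials `X^m`, `m ∈ ℤ^r`, are characters of the torus `T = (𝔽_q^*)^r`, and
`∑_{P ∈ T} P^m` is `(-1)^r` when `q - 1` divides every `m i` and `0` otherwise. Since distinct
points of `H` are incongruent modulo `q - 1`, `X^{-m}` and `X^u` with `m, u ∈ H` are orthogonal
unless `m = u`; this gives `C(-H∖-U) ⊆ C(U)^⊥`. Conversely, `∑_{m ∈ H} X^m` is `(-1)^r` at `1`
and `0` elsewhere on `T`, so every function `e` on `T` expands as `e = ∑_{m ∈ H} c_m X^{-m}` with
`c_m = (-1)^r ∑_P e(P) P^m`, and `c_m = 0` for `m ∈ U` when `e ⊥ C(U)`.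
-/

open Finset

namespace FiniteField

variable {K : Type*} [Field K] [Fintype K] [DecidableEq K]

theorem sum_units_zpow (a : ℤ) :
    ∑ x : Kˣ, ((x ^ a : Kˣ) : K) = if (Fintype.card Kˣ : ℤ) ∣ a then -1 else 0 := by
  have hnat (n : ℕ) :
      ∑ x : Kˣ, ((x ^ (n : ℤ) : Kˣ) : K) = if (Fintype.card Kˣ : ℤ) ∣ n then -1 else 0 := by
    simp only [zpow_natCast, Units.val_pow_eq_pow_val, Int.natCast_dvd_natCast,
      Fintype.card_units]
    exact sum_pow_units K n
  obtain ⟨n, rfl | rfl⟩ := Int.eq_nat_or_neg a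
  · exact hnat n
  · simp only [dvd_neg]
    rw [← hnat n]
    exact Fintype.sum_equiv (Equiv.inv Kˣ) _ _ fun x => by simp

theorem sum_Icc_zpow (y : Kˣ) :
    ∑ k ∈ Icc (0 : ℤ) (Fintype.card K - 2), ((y ^ k : Kˣ) : K) = if y = 1 then -1 else 0 := by
  have hlen : ((Fintype.card K : ℤ) - 2 + 1 - 0).toNat = Fintype.card K - 1 := by omega
  rw [Int.Icc_eq_finset_map, sum_map, hlen]
  simp only [Function.Embedding.trans_apply, Nat.castEmbedding_apply, addLeftEmbedding_apply,
    zero_add, zpow_natCast, Units.val_pow_eq_pow_val]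
  split_ifs with hy
  · simp only [hy, Units.val_one, one_pow, sum_const, card_range, nsmul_eq_mul, mul_one]
    rw [Nat.cast_sub Fintype.card_pos, cast_card_eq_zero, Nat.cast_one, zero_sub]
  · rw [geom_sum_eq fun h => hy (Units.ext h), pow_card_sub_one_eq_one _ y.ne_zero,
      sub_self, zero_div]

end FiniteField

noncomputable def Hfinset (q r : ℕ) : Finset (Fin r → ℤ) :=
  Fintype.piFinset fun _ => Icc 0 ((q : ℤ) - 2)

theorem coe_Hfinset (q r : ℕ) : (Hfinset q r : Set (Fin r → ℤ)) = Hset q r := by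
  ext m
  simp [Hfinset, Hset, Pi.le_def, forall_and]

theorem eq_of_mem_Hset_of_dvd_sub {q r : ℕ} {u m : Fin r → ℤ} (hu : u ∈ Hset q r)
    (hm : m ∈ Hset q r) (hdvd : ∀ i, (q : ℤ) - 1 ∣ u i - m i) : u = m := by
  funext i
  have := Int.eq_zero_of_abs_lt_dvd (hdvd i) (by have := hu i; have := hm i; rw [abs_lt]; omega)
  omega

section Torus

variable {K : Type} [Field K] {r : ℕ}

def laurentMonomial (m : Fin r → ℤ) (P : Fin r → Kˣ) : K := ∏ i, ((P i ^ m i : Kˣ) : K)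

theorem laurentEval_eq_sum (f : (Fin r → ℤ) →₀ K) (P : Fin r → Kˣ) :
    laurentEval f P = f.sum fun u a => a * laurentMonomial u P := rfl

theorem laurentEval_single (m : Fin r → ℤ) (a : K) (P : Fin r → Kˣ) :
    laurentEval (Finsupp.single m a) P = a * laurentMonomial m P := by
  rw [laurentEval_eq_sum, Finsupp.sum_single_index (zero_mul _)]

theorem laurentEval_finsetSum {ι : Type*} (s : Finset ι) (g : ι → (Fin r → ℤ) →₀ K)
    (P : Fin r → Kˣ) : laurentEval (∑ i ∈ s, g i) P = ∑ i ∈ s, laurentEval (g i) P := by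
  simp only [laurentEval_eq_sum]
  exact (Finsupp.sum_finsetSum_index (fun _ => zero_mul _) fun _ _ _ => add_mul _ _ _).symm

theorem laurentMonomial_add (u v : Fin r → ℤ) (P : Fin r → Kˣ) :
    laurentMonomial (u + v) P = laurentMonomial u P * laurentMonomial v P := by
  simp only [laurentMonomial, Pi.add_apply, zpow_add, Units.val_mul, prod_mul_distrib]

theorem laurentMonomial_mul_neg (m : Fin r → ℤ) (P Q : Fin r → Kˣ) :
    laurentMonomial m P * laurentMonomial (-m) Q = laurentMonomial m (P * Q⁻¹) := by
  simp only [laurentMonomial, ← prod_mul_distrib, Pi.neg_apply, Pi.mul_apply, Pi.inv_apply,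
    mul_zpow, zpow_neg, inv_zpow, Units.val_mul]

section Finite

variable [Fintype K] [DecidableEq K]

theorem sum_laurentEval_mul_laurentEval (g f : (Fin r → ℤ) →₀ K) :
    ∑ P, laurentEval g P * laurentEval f P =
      g.sum fun v b => f.sum fun u a => b * a * ∑ P, laurentMonomial (v + u) P := by
  simp only [laurentEval_eq_sum, Finsupp.sum, sum_mul_sum]
  simp only [mul_sum, laurentMonomial_add, mul_mul_mul_comm]
  rw [sum_comm]
  exact sum_congr rfl fun _ _ => sum_comm

theorem sum_laurentMonomial (m : Fin r → ℤ) :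
    ∑ P : Fin r → Kˣ, laurentMonomial m P =
      if ∀ i, (Fintype.card Kˣ : ℤ) ∣ m i then (-1) ^ r else 0 := by
  simp only [laurentMonomial]
  rw [← Fintype.prod_sum fun i (x : Kˣ) => ((x ^ m i : Kˣ) : K)]
  simp only [FiniteField.sum_units_zpow, Fintype.prod_ite_zero, prod_const, card_univ,
    Fintype.card_fin]

theorem sum_Hfinset_laurentMonomial (y : Fin r → Kˣ) :
    ∑ m ∈ Hfinset (Fintype.card K) r, laurentMonomial m y = if y = 1 then (-1) ^ r else 0 := by
  simp only [Hfinset, laurentMonomial]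
  rw [← prod_univ_sum _ fun i k => ((y i ^ k : Kˣ) : K)]
  simp only [FiniteField.sum_Icc_zpow, Fintype.prod_ite_zero, prod_const, card_univ,
    Fintype.card_fin, ← funext_iff, ← Pi.one_def]

-- `(-1) ^ r` is the inverse of `(q - 1) ^ r = |T(𝔽_q)|` in `K`.
def torusCoeff (e : (Fin r → Kˣ) → K) (m : Fin r → ℤ) : K :=
  (-1) ^ r * ∑ P, e P * laurentMonomial m P

theorem sum_torusCoeff_mul_laurentMonomial (e : (Fin r → Kˣ) → K) (Q : Fin r → Kˣ) :
    ∑ m ∈ Hfinset (Fintype.card K) r, torusCoeff e m * laurentMonomial (-m) Q = e Q :=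
  calc ∑ m ∈ Hfinset (Fintype.card K) r, torusCoeff e m * laurentMonomial (-m) Q
      = (-1) ^ r * ∑ P, e P * ∑ m ∈ Hfinset (Fintype.card K) r,
          laurentMonomial m (P * Q⁻¹) := by
        simp only [torusCoeff, mul_assoc, sum_mul, mul_sum, laurentMonomial_mul_neg]
        exact sum_comm
    _ = (-1) ^ r * ((-1) ^ r * e Q) := by
        simp only [sum_Hfinset_laurentMonomial, mul_inv_eq_one, mul_ite, mul_zero,
          Fintype.sum_ite_eq', mul_comm]
    _ = e Q := by rw [← mul_assoc, ← mul_pow, neg_one_mul, neg_neg, one_pow, one_mul]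

theorem sum_laurentEval_mul_laurentEval_eq_zero {U : Set (Fin r → ℤ)}
    (hU : U ⊆ Hset (Fintype.card K) r) {g f : (Fin r → ℤ) →₀ K}
    (hg : ↑g.support ⊆ (fun m => -m) '' (Hset (Fintype.card K) r \ U)) (hf : ↑f.support ⊆ U) :
    ∑ P, laurentEval g P * laurentEval f P = 0 := by
  rw [sum_laurentEval_mul_laurentEval]
  refine sum_eq_zero fun v hv => sum_eq_zero fun u hu => ?_
  obtain ⟨m, ⟨hmH, hmU⟩, rfl⟩ := hg hv
  have huU : u ∈ U := hf hu
  dsimp only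
  rw [sum_laurentMonomial, if_neg, mul_zero]
  intro hdvd
  have hcard : (Fintype.card Kˣ : ℤ) = Fintype.card K - 1 := by
    rw [Fintype.card_units, Nat.cast_sub Fintype.card_pos, Nat.cast_one]
  have hum : u = m := eq_of_mem_Hset_of_dvd_sub (hU huU) hmH fun i => by
    simpa [hcard, neg_add_eq_sub] using hdvd i
  exact hmU (hum ▸ huU)

theorem exists_laurentEval_eq_of_orthogonal {U : Set (Fin r → ℤ)} (e : (Fin r → Kˣ) → K)
    (he : ∀ m ∈ U, ∑ P, e P * laurentMonomial m P = 0) :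
    ∃ g : (Fin r → ℤ) →₀ K, ↑g.support ⊆ (fun m => -m) '' (Hset (Fintype.card K) r \ U) ∧
      e = fun P => laurentEval g P := by
  classical
  set s := (Hfinset (Fintype.card K) r).filter (· ∉ U)
  refine ⟨∑ m ∈ s, Finsupp.single (-m) (torusCoeff e m), fun v hv => ?_, funext fun Q => ?_⟩
  · obtain ⟨m, hm, hv⟩ := mem_biUnion.mp (Finsupp.support_finsetSum hv)
    rw [mem_filter, ← mem_coe, coe_Hfinset] at hm
    exact ⟨m, hm, (mem_singleton.mp (Finsupp.support_single_subset hv)).symm⟩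
  · simp only [laurentEval_finsetSum, laurentEval_single]
    rw [sum_filter_of_ne, sum_torusCoeff_mul_laurentMonomial]
    intro m _ hm hmU
    simp [torusCoeff, he m hmU] at hm

end Finite

end Torus

/-- the orthogonal complement (w.r.t. the standard bilinear form on
functions on the torus) of the toric code of `U ⊆ H` is exactly the toric code of
`−H∖−U`, i.e. the dual code of `C` is the toric code of `−H∖−U`. -/
theorem stmt5 {K : Type} [Field K] [Fintype K] [DecidableEq K]
    (q : ℕ) (hq : Fintype.card K = q) {r : ℕ}
    (U : Set (Fin r → ℤ)) (hU : U ⊆ Hset q r) :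
    {e : (Fin r → Kˣ) → K | ∀ f : (Fin r → ℤ) →₀ K, ↑f.support ⊆ U →
        ∑ P : Fin r → Kˣ, e P * laurentEval f P = 0} =
      {e : (Fin r → Kˣ) → K | ∃ g : (Fin r → ℤ) →₀ K,
        ↑g.support ⊆ (fun m => -m) '' (Hset q r \ U) ∧
        e = fun P => laurentEval g P} := by
  subst hq
  ext e
  constructor
  · intro he
    refine exists_laurentEval_eq_of_orthogonal e fun m hm => ?_
    simpa [laurentEval_single] using he (Finsupp.single m 1) (by simpa using hm)
  · rintro ⟨g, hg, rfl⟩ f hf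
    exact sum_laurentEval_mul_laurentEval_eq_zero hU hg hf
end

section
/- (Strong multiplication for toric secret sharing schemes.) Let U ⊆ ℤ^r be a finite subset, let U+U = {u_1 + u_2 : u_1, u_2 ∈ U} be the Minkowski sum, set n = (q−1)^r − 1, and let t be a natural number. Assume that every h ∈ 𝔽_q<U+U> which vanishes at at least n − t points of the torus (𝔽_q^*)^r vanishes at every point of (𝔽_q^*)^r. Fix P_0 ∈ (𝔽_q^*)^r, let A ⊆ (𝔽_q^*)^r ∖ {P_0} with |A| ≤ t, and set B = (𝔽_q^*)^r ∖ ({P_0} ∪ A). Then for all f, g, f', g' ∈ 𝔽_q<U> with f(P)·g(P) = f'(P)·g'(P) for every P ∈ B, one has f(P_0)·g(P_0) = f'(P_0)·g'(P_0); i.e., after removing any t shares, the products of the remaining shares determine the product of the secrets. -/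
open scoped BigOperators

/-!
Put `h = f g - f' g'`, a Laurent polynomial supported in `U + U`. By hypothesis it
vanishes at every torus point outside `{P₀} ∪ A`, i.e. at at least `(q - 1)^r - 1 - t` points,
so the hypothesis on `U + U` forces it to vanish at `P₀` as well.
-/

open Pointwise

section Support

variable {K G : Type*} [Ring K] [AddMonoid G] {U : Set G}

theorem AddMonoidAlgebra.support_coeff_mul_subset_add (a b : AddMonoidAlgebra K G)
    (ha : ↑a.coeff.support ⊆ U) (hb : ↑b.coeff.support ⊆ U) :
    ↑(a * b).coeff.support ⊆ U + U := by
  classical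
  intro w hw
  obtain ⟨u₁, hu₁, u₂, hu₂, rfl⟩ := Finset.mem_add.mp (support_coeff_mul_subset a b hw)
  exact Set.add_mem_add (ha hu₁) (hb hu₂)

theorem AddMonoidAlgebra.support_coeff_mul_sub_mul_subset_add (a b c d : AddMonoidAlgebra K G)
    (ha : ↑a.coeff.support ⊆ U) (hb : ↑b.coeff.support ⊆ U)
    (hc : ↑c.coeff.support ⊆ U) (hd : ↑d.coeff.support ⊆ U) :
    ↑(a * b - c * d).coeff.support ⊆ U + U := by
  classical
  intro w hw
  rcases Finset.mem_union.mp (Finsupp.support_sub hw) with hab | hcd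
  · exact support_coeff_mul_subset_add a b ha hb hab
  · exact support_coeff_mul_subset_add c d hc hd hcd

end Support

section TorusEval

variable {K : Type} [Field K] {r : ℕ}

noncomputable def torusCharacter (P : Fin r → Kˣ) : Multiplicative (Fin r → ℤ) →* K where
  toFun u := ∏ i, ((P i ^ u.toAdd i : Kˣ) : K)
  map_one' := by simp
  map_mul' u v := by
    simp only [toAdd_mul, Pi.add_apply, zpow_add, Units.val_mul, Finset.prod_mul_distrib]

noncomputable def torusEval (P : Fin r → Kˣ) : AddMonoidAlgebra K (Fin r → ℤ) →ₐ[K] K :=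
  AddMonoidAlgebra.lift K K (Fin r → ℤ) (torusCharacter P)

theorem laurentEval_coeff (f : AddMonoidAlgebra K (Fin r → ℤ)) (P : Fin r → Kˣ) :
    laurentEval f.coeff P = torusEval P f := by
  rw [torusEval, AddMonoidAlgebra.lift_apply]
  rfl

theorem natCard_torus [Fintype K] :
    (Nat.card (Fin r → Kˣ) : ℤ) = ((Fintype.card K : ℤ) - 1) ^ r := by
  classical
  rw [Nat.card_eq_fintype_card, Fintype.card_fun, Fintype.card_units, Fintype.card_fin,
    Nat.cast_pow, Nat.cast_sub Fintype.card_pos, Nat.cast_one]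

end TorusEval

theorem natCard_le_natCard_add_card_of_compl_subset {α : Type*} [Finite α] {S : Set α}
    {s : Finset α} (h : Sᶜ ⊆ s) : Nat.card α ≤ Nat.card S + s.card := by
  rw [← Set.ncard_add_ncard_compl S, Nat.card_coe_set_eq]
  gcongr
  simpa using Set.ncard_le_ncard h

theorem stmt9_general {K : Type} [Field K] [Fintype K]
    (q : ℕ) (hq : Fintype.card K = q) {r : ℕ}
    (U : Set (Fin r → ℤ)) (t : ℕ)
    (hmult : ∀ h : (Fin r → ℤ) →₀ K,
      ↑h.support ⊆ {w : Fin r → ℤ | ∃ u₁ ∈ U, ∃ u₂ ∈ U, w = u₁ + u₂} →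
      (((q : ℤ) - 1) ^ r - 1) - t ≤
        (Nat.card {P : Fin r → Kˣ | laurentEval h P = 0} : ℤ) →
      ∀ P : Fin r → Kˣ, laurentEval h P = 0)
    (P₀ : Fin r → Kˣ) (A : Finset (Fin r → Kˣ)) (hP₀ : P₀ ∉ A) (hA : A.card ≤ t)
    (f g f' g' : (Fin r → ℤ) →₀ K)
    (hf : ↑f.support ⊆ U) (hg : ↑g.support ⊆ U)
    (hf' : ↑f'.support ⊆ U) (hg' : ↑g'.support ⊆ U)
    (hprod : ∀ P : Fin r → Kˣ, P ≠ P₀ → P ∉ A →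
      laurentEval f P * laurentEval g P = laurentEval f' P * laurentEval g' P) :
    laurentEval f P₀ * laurentEval g P₀ = laurentEval f' P₀ * laurentEval g' P₀ := by
  classical
  let ofCoeff := @AddMonoidAlgebra.ofCoeff K (Fin r → ℤ) _
  set h := ofCoeff f * ofCoeff g - ofCoeff f' * ofCoeff g'
  have h_eval (P : Fin r → Kˣ) : laurentEval h.coeff P =
      laurentEval f P * laurentEval g P - laurentEval f' P * laurentEval g' P := by
    simp only [h, laurentEval_coeff, map_sub, map_mul]
    rfl
  have h_support : ↑h.coeff.support ⊆ {w | ∃ u₁ ∈ U, ∃ u₂ ∈ U, w = u₁ + u₂} := fun w hw ↦ by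
    obtain ⟨u₁, hu₁, u₂, hu₂, rfl⟩ :=
      AddMonoidAlgebra.support_coeff_mul_sub_mul_subset_add _ _ _ _ hf hg hf' hg' hw
    exact ⟨u₁, hu₁, u₂, hu₂, rfl⟩
  have h_nonzero_subset : {P | laurentEval h.coeff P = 0}ᶜ ⊆ ↑(insert P₀ A) := fun P hP ↦ by
    by_contra hPA
    simp only [Finset.coe_insert, Set.mem_insert_iff, Finset.mem_coe, not_or] at hPA
    exact hP (by simp only [Set.mem_ofPred_eq, h_eval, hprod P hPA.1 hPA.2, sub_self])
  have h_card := natCard_le_natCard_add_card_of_compl_subset h_nonzero_subset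
  rw [Finset.card_insert_of_notMem hP₀] at h_card
  have h_vanish := hmult h.coeff h_support (by
    have := natCard_torus (K := K) (r := r)
    rw [hq] at this
    omega) P₀
  rwa [h_eval, sub_eq_zero] at h_vanish

/-- strong multiplication: with `n = (q−1)^r − 1`, if every
`h ∈ 𝔽_q<U+U>` vanishing at at least `n − t` torus points vanishes everywhere,
then after removing any `t` shares, the products of the remaining shares
determine the product of the secrets. -/
theorem stmt9 {K : Type} [Field K] [Fintype K]
    (q : ℕ) (hq : Fintype.card K = q) {r : ℕ}
    (U : Set (Fin r → ℤ)) (hUfin : U.Finite) (t : ℕ)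
    (hmult : ∀ h : (Fin r → ℤ) →₀ K,
      ↑h.support ⊆ {w : Fin r → ℤ | ∃ u₁ ∈ U, ∃ u₂ ∈ U, w = u₁ + u₂} →
      (((q : ℤ) - 1) ^ r - 1) - t ≤
        (Nat.card {P : Fin r → Kˣ | laurentEval h P = 0} : ℤ) →
      ∀ P : Fin r → Kˣ, laurentEval h P = 0)
    (P₀ : Fin r → Kˣ) (A : Finset (Fin r → Kˣ)) (hP₀ : P₀ ∉ A) (hA : A.card ≤ t)
    (f g f' g' : (Fin r → ℤ) →₀ K)
    (hf : ↑f.support ⊆ U) (hg : ↑g.support ⊆ U)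
    (hf' : ↑f'.support ⊆ U) (hg' : ↑g'.support ⊆ U)
    (hprod : ∀ P : Fin r → Kˣ, P ≠ P₀ → P ∉ A →
      laurentEval f P * laurentEval g P = laurentEval f' P * laurentEval g' P) :
    laurentEval f P₀ * laurentEval g P₀ = laurentEval f' P₀ * laurentEval g' P₀ :=
  stmt9_general q hq U t hmult P₀ A hP₀ hA f g f' g' hf hg hf' hg' hprod
end

section
/- (Maximal number of zeros on a Hirzebruch surface.) Let d, e, r be positive integers with d ≤ q−2, e ≤ q−2 and e + r·d ≤ q−2, and let U = {(i,j) ∈ ℤ² : 0 ≤ i ≤ d, 0 ≤ j ≤ e + r·i} be the lattice points of the polytope with vertices (0,0), (d,0), (d,e+rd), (0,e). Then the maximum, over all nonzero f ∈ 𝔽_q<U>, of the number of points P ∈ (𝔽_q^*)² with f(P) = 0 equals max{ d(q−1) + (q−1−d)e , (q−1)(e+dr) }. -/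
/-!
Write `f = X₁^t · g` where `t` is the least `X₁`-exponent of `f` and `c(X₂) := g(0, X₂) ≠ 0`;
the polygon gives `deg_{X₁} g ≤ d - t` and `deg c ≤ e + r t`. On a fibre `X₂ = y` of the torus
with `c(y) ≠ 0`, the polynomial `g(X₁, y)` is nonzero of degree `≤ d - t`, so it has at most
`d - t` zeros; `c` vanishes on at most `e + r t` fibres, each with at most `q - 1` zeros. Hence
`f` has at most `(q - 1)(d - t + e + r t) ≤ (q - 1)(e + r d)` zeros, as `r ≥ 1`. The bound is
attained by `X₁^d ∏_{s ∈ S} (X₂ - s)` with `|S| = e + r d ≤ q - 1`, and for `r ≥ 1` it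
dominates `d(q - 1) + (q - 1 - d)e`.
-/

open scoped BigOperators

open Polynomial Finset
open scoped Polynomial.Bivariate

theorem Finset.card_le_card_mul_add_card_mul_of_fiber_le {α β : Type*} [Fintype α] [Fintype β]
    [DecidableEq α] [DecidableEq β] (s : Finset (α × β)) (B : Finset β) (m : ℕ)
    (hfiber : ∀ y ∉ B, #{x | (x, y) ∈ s} ≤ m) :
    #s ≤ #B * Fintype.card α + Fintype.card β * m := by
  have hle : ∀ y, #{z ∈ s | z.2 = y} ≤ (if y ∈ B then Fintype.card α else 0) + m := by
    intro y
    have hproj : #{z ∈ s | z.2 = y} ≤ #{x | (x, y) ∈ s} := by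
      refine card_le_card_of_injOn Prod.fst (fun z hz => ?_) (fun z hz w hw h => ?_)
      · simp only [coe_filter, Set.mem_ofPred_eq] at hz
        simpa [← hz.2] using hz.1
      · simp only [coe_filter, Set.mem_ofPred_eq] at hz hw
        exact Prod.ext h (hz.2.trans hw.2.symm)
    split_ifs with hy
    · exact hproj.trans ((card_le_univ _).trans (Nat.le_add_right _ _))
    · simpa using hproj.trans (hfiber y hy)
  calc #s = ∑ y, #{z ∈ s | z.2 = y} := card_eq_sum_card_fiberwise fun z _ => mem_univ z.2
    _ ≤ ∑ y, ((if y ∈ B then Fintype.card α else 0) + m) := sum_le_sum fun y _ => hle y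
    _ = #B * Fintype.card α + Fintype.card β * m := by
        simp [sum_add_distrib, sum_ite_mem]

theorem Nat.card_setOf_fin_two {α : Type*} (p : α → α → Prop) :
    Nat.card {P : Fin 2 → α | p (P 0) (P 1)} = Nat.card {x : α × α | p x.1 x.2} :=
  Nat.card_congr ((finTwoArrowEquiv α).subtypeEquiv fun _ => Iff.rfl)

theorem Polynomial.natDegree_sub_natTrailingDegree_map_le {R L : Type*} [Semiring R] [Semiring L]
    (p : R[X]) (φ : R →+* L) (hφ : φ p.trailingCoeff ≠ 0) :
    p.map φ ≠ 0 ∧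
      (p.map φ).natDegree - (p.map φ).natTrailingDegree ≤ p.natDegree - p.natTrailingDegree := by
  have hcoeff : (p.map φ).coeff p.natTrailingDegree ≠ 0 := by rwa [coeff_map]
  have hne : p.map φ ≠ 0 := fun h => hcoeff (by rw [h, coeff_zero])
  refine ⟨hne, tsub_le_tsub natDegree_map_le (le_natTrailingDegree hne fun i hi => ?_)⟩
  rw [coeff_map, coeff_eq_zero_of_lt_natTrailingDegree hi, map_zero]

section TorusZeros

variable {K : Type} [Field K] [Fintype K] [DecidableEq K]

theorem Polynomial.card_units_eval_eq_zero_le (g : K[X]) (hg : g ≠ 0) :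
    #{x : Kˣ | g.eval (x : K) = 0} ≤ g.natDegree - g.natTrailingDegree := by
  have hcard : Multiset.card (g.roots.filter (· ≠ 0)) =
      Multiset.card g.roots - g.roots.count 0 := by
    have h := congrArg Multiset.card (g.roots.filter_add_not (· = 0))
    rw [Multiset.card_add, Multiset.filter_eq', Multiset.card_replicate] at h
    simp only [ne_eq]
    omega
  calc #{x : Kˣ | g.eval (x : K) = 0}
      ≤ (g.roots.filter (· ≠ 0)).toFinset.card := by
        refine card_le_card_of_injOn (fun x : Kˣ => (x : K)) (fun x hx => ?_)
          (fun x _ y _ h => Units.ext h)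
        simp only [coe_filter, mem_univ, true_and, Set.mem_ofPred_eq] at hx
        simp [hg, hx]
    _ ≤ Multiset.card (g.roots.filter (· ≠ 0)) := Multiset.toFinset_card_le _
    _ ≤ g.natDegree - g.natTrailingDegree := by
        rw [hcard, count_roots, rootMultiplicity_eq_natTrailingDegree']
        exact Nat.sub_le_sub_right (card_roots' g) _

theorem Polynomial.card_torus_zeros_le (p : K[X][Y]) (hp : p ≠ 0) :
    #{x : Kˣ × Kˣ | p.evalEval (x.2 : K) (x.1 : K) = 0} ≤
      Fintype.card Kˣ * (p.natDegree - p.natTrailingDegree + p.trailingCoeff.natDegree) := by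
  set B : Finset Kˣ := {y | p.trailingCoeff.eval (y : K) = 0}
  have hB : #B ≤ p.trailingCoeff.natDegree :=
    (card_units_eval_eq_zero_le _ (trailingCoeff_nonzero_iff_nonzero.2 hp)).trans (Nat.sub_le _ _)
  have hfiber : ∀ y ∉ B,
      #{x | (x, y) ∈ ({x : Kˣ × Kˣ | p.evalEval (x.2 : K) (x.1 : K) = 0} : Finset _)} ≤
        p.natDegree - p.natTrailingDegree := by
    intro y hy
    obtain ⟨hne, hspread⟩ := natDegree_sub_natTrailingDegree_map_le p (evalRingHom (y : K))
      (by simpa [B] using hy)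
    calc _ = #{x : Kˣ | (p.map (evalRingHom (y : K))).eval (x : K) = 0} := by
          simp [eval_map, eval₂_evalRingHom]
      _ ≤ _ := (card_units_eval_eq_zero_le _ hne).trans hspread
  calc _ ≤ #B * Fintype.card Kˣ + Fintype.card Kˣ * (p.natDegree - p.natTrailingDegree) :=
        card_le_card_mul_add_card_mul_of_fiber_le _ B _ hfiber
    _ ≤ _ := by nlinarith

end TorusZeros

/-- `Y` stands for `X₁` and `X` for `X₂`; `Int.toNat` makes this faithful only on `ℕ²`. -/
noncomputable def laurentToBivariate {K : Type} [Field K] (f : (Fin 2 → ℤ) →₀ K) : K[X][Y] :=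
  ∑ u ∈ f.support, monomial (u 0).toNat (monomial (u 1).toNat (f u))

def hirzebruchPolygon (d e r : ℕ) : Set (Fin 2 → ℤ) :=
  {u | 0 ≤ u 0 ∧ u 0 ≤ (d : ℤ) ∧ 0 ≤ u 1 ∧ u 1 ≤ (e : ℤ) + (r : ℤ) * u 0}

section UpperBound

variable {K : Type} [Field K] {f : (Fin 2 → ℤ) →₀ K} {d e r : ℕ}

theorem nonneg_of_support_subset_hirzebruchPolygon (hsupp : ↑f.support ⊆ hirzebruchPolygon d e r) :
    ∀ u ∈ f.support, 0 ≤ u 0 ∧ 0 ≤ u 1 :=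
  fun _ hu => ⟨(hsupp hu).1, (hsupp hu).2.2.1⟩

theorem laurentEval_eq_evalEval (hf : ∀ u ∈ f.support, 0 ≤ u 0 ∧ 0 ≤ u 1) (P : Fin 2 → Kˣ) :
    laurentEval f P = (laurentToBivariate f).evalEval (P 1 : K) (P 0 : K) := by
  rw [laurentEval, laurentToBivariate, evalEval_finsetSum]
  refine sum_congr rfl fun u hu => ?_
  obtain ⟨h0, h1⟩ := hf u hu
  have hpow : ∀ (x : Kˣ) (n : ℤ), 0 ≤ n → ((x ^ n : Kˣ) : K) = (x : K) ^ n.toNat :=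
    fun x n hn => by lift n to ℕ using hn; simp
  rw [Fin.prod_univ_two, hpow _ _ h0, hpow _ _ h1]
  simp only [evalEval, eval_monomial, eval_mul, eval_pow, eval_C]
  ring

theorem coeff_coeff_laurentToBivariate (hf : ∀ u ∈ f.support, 0 ≤ u 0 ∧ 0 ≤ u 1) (i j : ℕ) :
    ((laurentToBivariate f).coeff i).coeff j = f ![(i : ℤ), (j : ℤ)] := by
  classical
  simp only [laurentToBivariate, finsetSum_coeff, coeff_monomial, apply_ite (coeff · j),
    coeff_zero]
  rw [sum_eq_single ![(i : ℤ), (j : ℤ)]]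
  · simp
  · intro u hu hne
    obtain ⟨h0, h1⟩ := hf u hu
    split_ifs with hi hj
    · refine absurd (funext fun k => ?_) hne
      fin_cases k <;> simp <;> omega
    all_goals rfl
  · intro h
    simp [Finsupp.notMem_support_iff.1 h]

theorem laurentToBivariate_ne_zero (hf : ∀ u ∈ f.support, 0 ≤ u 0 ∧ 0 ≤ u 1) (hf0 : f ≠ 0) :
    laurentToBivariate f ≠ 0 := by
  obtain ⟨u, hu⟩ := Finsupp.support_nonempty_iff.2 hf0
  have hu' : ![((u 0).toNat : ℤ), ((u 1).toNat : ℤ)] = u := by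
    funext k
    fin_cases k <;> simp [(hf u hu).1, (hf u hu).2]
  intro h
  have := coeff_coeff_laurentToBivariate hf (u 0).toNat (u 1).toNat
  rw [h, hu'] at this
  exact Finsupp.mem_support_iff.1 hu (by simpa using this.symm)

theorem laurentToBivariate_spread_le (hr : 0 < r) (hsupp : ↑f.support ⊆ hirzebruchPolygon d e r) :
    (laurentToBivariate f).natDegree - (laurentToBivariate f).natTrailingDegree +
      (laurentToBivariate f).trailingCoeff.natDegree ≤ e + r * d := by
  set p := laurentToBivariate f
  have hzero : ∀ i j : ℕ, d < i ∨ e + r * i < j → (p.coeff i).coeff j = 0 := by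
    intro i j hij
    rw [coeff_coeff_laurentToBivariate (nonneg_of_support_subset_hirzebruchPolygon hsupp)]
    refine Finsupp.notMem_support_iff.1 fun hmem => ?_
    obtain ⟨-, hi, -, hj⟩ := hsupp hmem
    simp only [Matrix.cons_val_zero, Matrix.cons_val_one] at hi hj
    rcases hij with hij | hij
    · omega
    · have : ((e + r * i : ℕ) : ℤ) < j := by exact_mod_cast hij
      push_cast at this
      omega
  have hdeg : p.natDegree ≤ d := natDegree_le_iff_coeff_eq_zero.2 fun i hi =>
    Polynomial.ext fun j => by simpa using hzero i j (Or.inl hi)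
  have hcol : p.trailingCoeff.natDegree ≤ e + r * p.natTrailingDegree :=
    natDegree_le_iff_coeff_eq_zero.2 fun j hj => hzero _ j (Or.inr hj)
  obtain ⟨m, hm⟩ := Nat.exists_eq_add_of_le ((natTrailingDegree_le_natDegree p).trans hdeg)
  have hspread : p.natDegree - p.natTrailingDegree ≤ m := by omega
  have hm_le : m ≤ r * m := Nat.le_mul_of_pos_left m hr
  have hrd : r * d = r * p.natTrailingDegree + r * m := by rw [hm, mul_add]
  linarith

theorem card_zeros_le_of_support_subset_hirzebruchPolygon [Fintype K] [DecidableEq K] (hr : 0 < r)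
    (hsupp : ↑f.support ⊆ hirzebruchPolygon d e r) (hf0 : f ≠ 0) :
    Nat.card {P : Fin 2 → Kˣ | laurentEval f P = 0} ≤ Fintype.card Kˣ * (e + r * d) := by
  have hquad := nonneg_of_support_subset_hirzebruchPolygon hsupp
  calc Nat.card {P : Fin 2 → Kˣ | laurentEval f P = 0}
      = #{x : Kˣ × Kˣ | (laurentToBivariate f).evalEval (x.2 : K) (x.1 : K) = 0} := by
        simp only [laurentEval_eq_evalEval hquad]
        rw [Nat.card_setOf_fin_two fun x₁ x₂ : Kˣ =>
          (laurentToBivariate f).evalEval (x₂ : K) x₁ = 0]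
        simp
    _ ≤ _ := card_torus_zeros_le _ (laurentToBivariate_ne_zero hquad hf0)
    _ ≤ _ := Nat.mul_le_mul_left _ (laurentToBivariate_spread_le hr hsupp)

end UpperBound

noncomputable def laurentX₁PowMul {K : Type} [Field K] (a : ℕ) (g : K[X]) : (Fin 2 → ℤ) →₀ K :=
  Finsupp.mapDomain (fun j : ℕ => ![(a : ℤ), (j : ℤ)]) g.toFinsupp.coeff

section Extremal

variable {K : Type} [Field K] (a : ℕ) (g : K[X])

theorem injective_vecCons_natCast_fin_two : Function.Injective fun j : ℕ => ![(a : ℤ), (j : ℤ)] :=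
  fun i j h => by simpa using congrFun h 1

theorem laurentEval_laurentX₁PowMul (P : Fin 2 → Kˣ) :
    laurentEval (laurentX₁PowMul a g) P = (P 0 : K) ^ a * g.eval (P 1 : K) := by
  change (laurentX₁PowMul a g).sum (fun u c => c * ∏ i, ((P i ^ u i : Kˣ) : K)) = _
  rw [laurentX₁PowMul, Finsupp.sum_mapDomain_index_inj (injective_vecCons_natCast_fin_two a),
    Finsupp.sum, support_toFinsupp, eval_eq_sum, sum_def, mul_sum]
  refine sum_congr rfl fun j _ => ?_
  simp [Fin.prod_univ_two, toFinsupp_apply]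
  ring

theorem laurentX₁PowMul_ne_zero (hg : g ≠ 0) : laurentX₁PowMul a g ≠ 0 := by
  rw [laurentX₁PowMul, Ne, ← Finsupp.mapDomain_zero (f := fun j : ℕ => ![(a : ℤ), (j : ℤ)]),
    (Finsupp.mapDomain_injective (injective_vecCons_natCast_fin_two a)).eq_iff]
  simpa [← support_toFinsupp, Finsupp.support_eq_empty] using hg

theorem support_laurentX₁PowMul_subset {d e r : ℕ} (had : a ≤ d) (hg : g.natDegree ≤ e + r * a) :
    ↑(laurentX₁PowMul a g).support ⊆ hirzebruchPolygon d e r := by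
  classical
  intro u hu
  rw [laurentX₁PowMul, Finsupp.mapDomain_support_of_injective (injective_vecCons_natCast_fin_two a),
    support_toFinsupp] at hu
  simp only [coe_image, Set.mem_image] at hu
  obtain ⟨j, hj, rfl⟩ := hu
  have hjg : j ≤ e + r * a := (le_natDegree_of_mem_supp j hj).trans hg
  refine ⟨by simp, by simpa using had, by simp, ?_⟩
  simp only [Matrix.cons_val_zero, Matrix.cons_val_one]
  exact_mod_cast hjg

theorem exists_card_zeros_eq_of_le [Fintype K] [DecidableEq K] {d e r : ℕ}
    (h : e + r * d ≤ Fintype.card Kˣ) :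
    ∃ f : (Fin 2 → ℤ) →₀ K, ↑f.support ⊆ hirzebruchPolygon d e r ∧ f ≠ 0 ∧
      Nat.card {P : Fin 2 → Kˣ | laurentEval f P = 0} = Fintype.card Kˣ * (e + r * d) := by
  obtain ⟨S, -, hS⟩ := exists_subset_card_eq (s := (univ : Finset Kˣ)) (by simpa using h)
  set g : K[X] := ∏ s ∈ S, (X - C (s : K))
  have hg0 : g ≠ 0 := (monic_prod_of_monic _ _ fun s _ => monic_X_sub_C _).ne_zero
  have hdeg : g.natDegree = e + r * d := by
    rw [natDegree_finsetProd_X_sub_C_eq_card, hS]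
  have hroots : ∀ x : Kˣ, g.eval (x : K) = 0 ↔ x ∈ S := by
    simp [g, eval_prod, prod_eq_zero_iff, sub_eq_zero, Units.val_inj]
  refine ⟨laurentX₁PowMul d g, support_laurentX₁PowMul_subset d g le_rfl hdeg.le,
    laurentX₁PowMul_ne_zero d g hg0, ?_⟩
  simp only [laurentEval_laurentX₁PowMul, mul_eq_zero, pow_eq_zero_iff', Units.ne_zero, false_and,
    false_or, hroots]
  have hfiber : ({x : Kˣ × Kˣ | x.2 ∈ S} : Finset _) = univ ×ˢ S := by ext; simp
  rw [Nat.card_setOf_fin_two fun _ x₂ : Kˣ => x₂ ∈ S]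
  simp [hfiber, hS]

end Extremal

theorem stmt11_general {K : Type} [Field K] [Fintype K]
    (q : ℕ) (hq : Fintype.card K = q)
    (d e r : ℕ) (hr : 0 < r)
    (hedr : e + r * d ≤ q - 2)
    (U : Set (Fin 2 → ℤ))
    (hU : U = {u : Fin 2 → ℤ | 0 ≤ u 0 ∧ u 0 ≤ (d : ℤ) ∧ 0 ≤ u 1 ∧
        u 1 ≤ (e : ℤ) + (r : ℤ) * u 0}) :
    IsGreatest
      {z : ℕ | ∃ f : (Fin 2 → ℤ) →₀ K, ↑f.support ⊆ U ∧ f ≠ 0 ∧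
        z = Nat.card {P : Fin 2 → Kˣ | laurentEval f P = 0}}
      (max (d * (q - 1) + (q - 1 - d) * e) ((q - 1) * (e + d * r))) := by
  classical
  subst hU
  have hcard : Fintype.card Kˣ = q - 1 := by rw [Fintype.card_units, hq]
  have hedr' : e + r * d ≤ Fintype.card Kˣ := by omega
  have hmax : d * (q - 1) + (q - 1 - d) * e ≤ (q - 1) * (e + d * r) := by
    calc d * (q - 1) + (q - 1 - d) * e ≤ (q - 1) * (d * r) + (q - 1) * e := by
          refine add_le_add ?_ (Nat.mul_le_mul_right _ (Nat.sub_le _ _))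
          rw [mul_comm]
          exact Nat.mul_le_mul_left _ (Nat.le_mul_of_pos_right d hr)
      _ = (q - 1) * (e + d * r) := by ring
  rw [max_eq_right hmax, mul_comm d r, ← hcard]
  constructor
  · obtain ⟨f, hsupp, hf0, hzeros⟩ := exists_card_zeros_eq_of_le hedr'
    exact ⟨f, hsupp, hf0, hzeros.symm⟩
  · rintro _ ⟨f, hsupp, hf0, rfl⟩
    exact card_zeros_le_of_support_subset_hirzebruchPolygon hr hsupp hf0

/-- maximal number of zeros on a Hirzebruch surface: for `U` the
lattice points of the polytope with vertices `(0,0), (d,0), (d,e+rd), (0,e)`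
(with `d, e, e+rd ≤ q−2`), the maximum number of torus zeros of a nonzero
`f ∈ 𝔽_q<U>` equals `max{d(q−1) + (q−1−d)e, (q−1)(e+dr)}`. -/
theorem stmt11 {K : Type} [Field K] [Fintype K]
    (q : ℕ) (hq : Fintype.card K = q)
    (d e r : ℕ) (hd : 0 < d) (he : 0 < e) (hr : 0 < r)
    (hdq : d ≤ q - 2) (heq : e ≤ q - 2) (hedr : e + r * d ≤ q - 2)
    (U : Set (Fin 2 → ℤ))
    (hU : U = {u : Fin 2 → ℤ | 0 ≤ u 0 ∧ u 0 ≤ (d : ℤ) ∧ 0 ≤ u 1 ∧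
        u 1 ≤ (e : ℤ) + (r : ℤ) * u 0}) :
    IsGreatest
      {z : ℕ | ∃ f : (Fin 2 → ℤ) →₀ K, ↑f.support ⊆ U ∧ f ≠ 0 ∧
        z = Nat.card {P : Fin 2 → Kˣ | laurentEval f P = 0}}
      (max (d * (q - 1) + (q - 1 - d) * e) ((q - 1) * (e + d * r))) :=
  stmt11_general q hq d e r hr hedr U hU
end

section
/- Let a, b be integers with 0 ≤ b ≤ a ≤ q−2 and q ≥ 3, and let U = {(i,j) ∈ ℤ² : 0 ≤ j ≤ q−2, 0 ≤ i, and (q−2)·i ≤ a(q−2) + (b−a)·j} be the lattice points of the polytope with vertices (0,0), (a,0), (b,q−2), (0,q−2). Then every nonzero f ∈ 𝔽_q<U> vanishes at no more than (q−1)² − (q−1−a) points of the torus (𝔽_q^*)². -/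
open scoped BigOperators

/-!
The polytope lies in the box `0 ≤ u 0 ≤ a`, `0 ≤ u 1 ≤ q - 2`, so `f` is a polynomial `p(x, y)`
with `deg_x p ≤ q - 2` and `deg_y p ≤ a`, where `x = P 1` and `y = P 0`. For fixed `x`, the
polynomial `p(x, ·)` vanishes identically only if `x` is a root of the leading coefficient of `p`
in `y`, which happens for at most `q - 2` values of `x`; on every other fibre `p` has at most `a`
zeros. Summing over the `q - 1` fibres gives at most `(q - 2)(q - 1) + a = (q - 1)² - (q - 1 - a)`
zeros.
-/

open Polynomial Finset

section

variable {K : Type*} [Field K] [DecidableEq K]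

theorem Polynomial.card_filter_eval_eq_zero_le_natDegree (A : Finset K) {g : K[X]} (hg : g ≠ 0) :
    #(A.filter fun x => g.eval x = 0) ≤ g.natDegree :=
  card_le_degree_of_subset_roots fun _ hx => (mem_roots hg).2 (mem_filter.1 hx).2

theorem Polynomial.card_filter_evalEval_eq_zero_add_mul_le (A B : Finset K) {p : K[X][X]}
    (hp : p ≠ 0) {d e : ℕ} (hd : ∀ i, (p.coeff i).natDegree ≤ d) (he : p.natDegree ≤ e) :
    #((A ×ˢ B).filter fun z => p.evalEval z.1 z.2 = 0) + (#A - d) * (#B - e) ≤ #A * #B := by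
  rcases le_or_gt #B e with hBe | heB
  · rw [Nat.sub_eq_zero_of_le hBe, mul_zero, add_zero, ← card_product]
    exact card_filter_le _ _
  set bad : K → Prop := fun x => p.map (evalRingHom x) = 0
  have hbad : #(A.filter bad) ≤ d := by
    refine (card_le_card fun x hx => ?_).trans
      ((card_filter_eval_eq_zero_le_natDegree A (leadingCoeff_ne_zero.2 hp)).trans (hd _))
    rw [mem_filter] at hx ⊢
    refine ⟨hx.1, ?_⟩
    rw [leadingCoeff, ← coe_evalRingHom, ← coeff_map, hx.2, coeff_zero]
  have hfibre : ∀ x ∈ A, #(B.filter fun y => p.evalEval x y = 0) ≤ if bad x then #B else e := by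
    intro x _
    split_ifs with hx
    · exact card_filter_le _ _
    · simp_rw [← map_evalRingHom_eval]
      exact (card_filter_eval_eq_zero_le_natDegree B hx).trans (natDegree_map_le.trans he)
  have hsum : #((A ×ˢ B).filter fun z => p.evalEval z.1 z.2 = 0) ≤
      #(A.filter bad) * #B + #(A.filter fun x => ¬bad x) * e :=
    calc _ = ∑ x ∈ A, #(B.filter fun y => p.evalEval x y = 0) := by
            rw [card_filter, sum_product]
            exact sum_congr rfl fun x _ => (card_filter _ _).symm
      _ ≤ ∑ x ∈ A, if bad x then #B else e := sum_le_sum hfibre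
      _ = _ := by rw [sum_ite, sum_const, sum_const, smul_eq_mul, smul_eq_mul]
  have hsplit := card_filter_add_card_filter_not (s := A) bad
  have hgood : (#A - d) * (#B - e) ≤ #(A.filter fun x => ¬bad x) * (#B - e) :=
    Nat.mul_le_mul_right _ (by omega)
  have hgood' : #(A.filter fun x => ¬bad x) * e + #(A.filter fun x => ¬bad x) * (#B - e) =
      #(A.filter fun x => ¬bad x) * #B := by
    rw [← mul_add, Nat.add_sub_cancel' heB.le]
  have hAB : #A * #B = #(A.filter bad) * #B + #(A.filter fun x => ¬bad x) * #B := by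
    rw [← add_mul, hsplit]
  omega

end

section

variable {K : Type} [Field K]

-- `Int.toNat` truncates negative exponents, so this is faithful only for `f` supported in `0 ≤ u`.
noncomputable def bivariateOfLaurent (f : (Fin 2 → ℤ) →₀ K) : K[X][X] :=
  ∑ u ∈ f.support, monomial (u 0).toNat (monomial (u 1).toNat (f u))

variable {f : (Fin 2 → ℤ) →₀ K}

theorem laurentEval_eq_evalEval_bivariateOfLaurent (hf : ∀ u ∈ f.support, 0 ≤ u)
    (P : Fin 2 → Kˣ) : laurentEval f P = (bivariateOfLaurent f).evalEval (P 1 : K) (P 0) := by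
  have hpow : ∀ (x : Kˣ) {n : ℤ}, 0 ≤ n → ((x ^ n : Kˣ) : K) = (x : K) ^ n.toNat := by
    intro x n hn
    lift n to ℕ using hn
    simp
  rw [laurentEval, bivariateOfLaurent, evalEval_finsetSum]
  refine sum_congr rfl fun u hu => ?_
  rw [Fin.prod_univ_two, hpow _ (hf u hu 0), hpow _ (hf u hu 1)]
  simp only [evalEval, eval_monomial, eval_mul, eval_pow, eval_C]
  ring

theorem coeff_coeff_bivariateOfLaurent (hf : ∀ u ∈ f.support, 0 ≤ u) {u : Fin 2 → ℤ}
    (hu : u ∈ f.support) :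
    ((bivariateOfLaurent f).coeff (u 0).toNat).coeff (u 1).toNat = f u := by
  rw [bivariateOfLaurent, finsetSum_coeff, finsetSum_coeff, sum_eq_single u]
  · simp
  · intro v hv hvu
    have : 0 ≤ v 0 ∧ 0 ≤ v 1 ∧ 0 ≤ u 0 ∧ 0 ≤ u 1 :=
      ⟨hf v hv 0, hf v hv 1, hf u hu 0, hf u hu 1⟩
    rw [coeff_monomial]
    split_ifs with h0
    · rw [coeff_monomial, if_neg]
      exact fun h1 => hvu (funext <| Fin.forall_fin_two.2 ⟨by omega, by omega⟩)
    · exact coeff_zero _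
  · exact fun h => (h hu).elim

theorem bivariateOfLaurent_ne_zero (hf : ∀ u ∈ f.support, 0 ≤ u) (hf0 : f ≠ 0) :
    bivariateOfLaurent f ≠ 0 := by
  obtain ⟨u, hu⟩ := Finsupp.support_nonempty_iff.2 hf0
  intro h
  have := coeff_coeff_bivariateOfLaurent hf hu
  rw [h, coeff_zero, coeff_zero] at this
  exact Finsupp.mem_support_iff.1 hu this.symm

theorem natDegree_bivariateOfLaurent_le {e : ℕ} (h : ∀ u ∈ f.support, (u 0).toNat ≤ e) :
    (bivariateOfLaurent f).natDegree ≤ e :=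
  natDegree_sum_le_of_forall_le _ _ fun u hu => (natDegree_monomial_le _).trans (h u hu)

theorem natDegree_coeff_bivariateOfLaurent_le {d : ℕ} (h : ∀ u ∈ f.support, (u 1).toNat ≤ d)
    (i : ℕ) : ((bivariateOfLaurent f).coeff i).natDegree ≤ d := by
  rw [bivariateOfLaurent, finsetSum_coeff]
  refine natDegree_sum_le_of_forall_le _ _ fun u hu => ?_
  rw [coeff_monomial]
  split_ifs
  · exact (natDegree_monomial_le _).trans (h u hu)
  · simp

end

theorem natCard_torus_zeros_eq {K : Type} [Field K] [Fintype K] [DecidableEq K] (F : K → K → K) :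
    Nat.card {P : Fin 2 → Kˣ | F (P 1) (P 0) = 0} =
      #((univ.erase 0 ×ˢ univ.erase 0).filter fun z : K × K => F z.1 z.2 = 0) := by
  simp only [Set.coe_ofPred, Nat.card_eq_fintype_card, Fintype.card_subtype]
  refine card_nbij (fun P => ((P 1 : K), (P 0 : K))) (fun P hP => ?_) (fun P _ Q _ h => ?_)
    (fun z hz => ?_)
  · simpa using (mem_filter.1 hP).2
  · simp only [Prod.mk.injEq] at h
    exact funext <| Fin.forall_fin_two.2 ⟨Units.ext h.2, Units.ext h.1⟩
  · simp only [coe_filter, mem_product, mem_erase, mem_univ, and_true, Set.mem_ofPred_eq] at hz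
    obtain ⟨⟨h1, h0⟩, hF⟩ := hz
    exact ⟨![Units.mk0 _ h0, Units.mk0 _ h1], by simpa using hF, rfl⟩

theorem stmt12_general {K : Type} [Field K] [Fintype K]
    (q : ℕ) (hq : Fintype.card K = q) (hq3 : 3 ≤ q)
    (a b : ℤ) (hb : 0 ≤ b) (hba : b ≤ a)
    (U : Set (Fin 2 → ℤ))
    (hU : U = {u : Fin 2 → ℤ | 0 ≤ u 1 ∧ u 1 ≤ (q : ℤ) - 2 ∧ 0 ≤ u 0 ∧
        ((q : ℤ) - 2) * u 0 ≤ a * ((q : ℤ) - 2) + (b - a) * u 1})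
    (f : (Fin 2 → ℤ) →₀ K) (hf : ↑f.support ⊆ U) (hf0 : f ≠ 0) :
    (Nat.card {P : Fin 2 → Kˣ | laurentEval f P = 0} : ℤ) ≤
      ((q : ℤ) - 1) ^ 2 - ((q : ℤ) - 1 - a) := by
  classical
  subst hU
  have hbox : ∀ u ∈ f.support, 0 ≤ u ∧ u 0 ≤ a ∧ u 1 ≤ (q : ℤ) - 2 := by
    intro u hu
    obtain ⟨hu1, hu1q, hu0, hpoly⟩ := hf hu
    refine ⟨fun i => by fin_cases i <;> assumption, ?_, hu1q⟩
    nlinarith [show (3 : ℤ) ≤ q by exact_mod_cast hq3]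
  have hnn : ∀ u ∈ f.support, 0 ≤ u := fun u hu => (hbox u hu).1
  have key := card_filter_evalEval_eq_zero_add_mul_le (univ.erase (0 : K)) (univ.erase 0)
    (bivariateOfLaurent_ne_zero hnn hf0)
    (natDegree_coeff_bivariateOfLaurent_le (d := q - 2) fun u hu => by
      have := hbox u hu; omega)
    (natDegree_bivariateOfLaurent_le (e := a.toNat) fun u hu =>
      Int.toNat_le_toNat (hbox u hu).2.1)
  have hcard := natCard_torus_zeros_eq fun x y => (bivariateOfLaurent f).evalEval x y
  beta_reduce at hcard
  simp only [laurentEval_eq_evalEval_bivariateOfLaurent hnn, hcard]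
  rw [card_erase_of_mem (mem_univ _), card_univ, hq,
    show q - 1 - (q - 2) = 1 by omega, one_mul] at key
  have hsq : ((q : ℤ) - 1) ^ 2 = ((q - 1) * (q - 1) : ℕ) := by
    push_cast [Nat.cast_sub (by omega : 1 ≤ q)]; ring
  have ha0 : 0 ≤ a := hb.trans hba
  omega

/-- for `U` the lattice points of the polytope with vertices
`(0,0), (a,0), (b,q−2), (0,q−2)` (`0 ≤ b ≤ a ≤ q−2`), every nonzero
`f ∈ 𝔽_q<U>` vanishes at no more than `(q−1)² − (q−1−a)` torus points. -/
theorem stmt12 {K : Type} [Field K] [Fintype K]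
    (q : ℕ) (hq : Fintype.card K = q) (hq3 : 3 ≤ q)
    (a b : ℤ) (hb : 0 ≤ b) (hba : b ≤ a) (ha : a ≤ (q : ℤ) - 2)
    (U : Set (Fin 2 → ℤ))
    (hU : U = {u : Fin 2 → ℤ | 0 ≤ u 1 ∧ u 1 ≤ (q : ℤ) - 2 ∧ 0 ≤ u 0 ∧
        ((q : ℤ) - 2) * u 0 ≤ a * ((q : ℤ) - 2) + (b - a) * u 1})
    (f : (Fin 2 → ℤ) →₀ K) (hf : ↑f.support ⊆ U) (hf0 : f ≠ 0) :
    (Nat.card {P : Fin 2 → Kˣ | laurentEval f P = 0} : ℤ) ≤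
      ((q : ℤ) - 1) ^ 2 - ((q : ℤ) - 1 - a) :=
  stmt12_general q hq hq3 a b hb hba U hU f hf hf0
end

section
/- (Reconstruction threshold on the toric surface.) Let a, b be integers with 0 ≤ b ≤ a ≤ q−2 and q ≥ 3, and let U = {(i,j) ∈ ℤ² : 0 ≤ j ≤ q−2, 0 ≤ i, and (q−2)·i ≤ a(q−2) + (b−a)·j}. Fix P_0 ∈ (𝔽_q^*)² and let A ⊆ (𝔽_q^*)² ∖ {P_0} with |A| ≥ (q−1)² − (q−1−a) + 1. Then any f, g ∈ 𝔽_q<U> with f(P) = g(P) for all P ∈ A satisfy f(P_0) = g(P_0); i.e., the reconstruction threshold of the scheme M(U) is at most 1 + (q−1)² − (q−1−a). -/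
open scoped BigOperators

/-!
The difference `h = f - g` is supported in the box `[0, a] × [0, q - 2]`. If `h ≠ 0`, view it as a
polynomial in `x` whose coefficients are polynomials in `y` of degree `< q - 1`: some coefficient
survives at some `y₀ ∈ 𝔽_q^*`, and then `h(·, y₀)` is a nonzero polynomial of degree `≤ a`, so `h`
is nonzero at `≥ q - 1 - a` points of the torus. Vanishing on `A` leaves fewer points than that.
-/

open Polynomial Finset

theorem Units.val_zpow_eq_pow_toNat {M : Type*} [Monoid M] (x : Mˣ) {z : ℤ} (hz : 0 ≤ z) :
    ((x ^ z : Mˣ) : M) = (x : M) ^ z.toNat := by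
  lift z to ℕ using hz
  simp

section Polynomial

variable {K : Type} [Field K] [Fintype K] [DecidableEq K]

theorem card_units_filter_eval_eq_zero_le {p : K[X]} (hp : p ≠ 0) :
    #{x : Kˣ | p.eval (x : K) = 0} ≤ p.natDegree := by
  rw [← card_map ⟨((↑) : Kˣ → K), Units.val_injective⟩]
  refine card_le_degree_of_subset_roots fun x hx => ?_
  obtain ⟨y, hy, rfl⟩ := mem_map.1 hx
  exact (mem_roots hp).2 (mem_filter.1 hy).2

theorem card_units_le_natDegree_add_card_eval_ne_zero {p : K[X]} (hp : p ≠ 0) :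
    Fintype.card Kˣ ≤ p.natDegree + #{x : Kˣ | p.eval (x : K) ≠ 0} := by
  rw [← card_univ, ← card_filter_add_card_filter_not (fun x : Kˣ => p.eval (x : K) = 0)]
  exact Nat.add_le_add_right (card_units_filter_eval_eq_zero_le hp) _

theorem exists_units_eval_ne_zero {p : K[X]} (hp : p ≠ 0)
    (hdeg : p.natDegree < Fintype.card Kˣ) : ∃ x : Kˣ, p.eval (x : K) ≠ 0 := by
  by_contra! h
  have := card_units_le_natDegree_add_card_eval_ne_zero hp
  simp only [h, ne_eq, not_true_eq_false, filter_false, card_empty, add_zero] at this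
  omega

theorem exists_units_card_le_natDegree_add_card_eval_map_ne_zero {p : K[X][X]} (hp : p ≠ 0)
    (hcoeff : ∀ i, (p.coeff i).natDegree < Fintype.card Kˣ) :
    ∃ y : Kˣ, Fintype.card Kˣ ≤
      p.natDegree + #{x : Kˣ | (p.map (evalRingHom (y : K))).eval (x : K) ≠ 0} := by
  obtain ⟨i, hi⟩ : ∃ i, p.coeff i ≠ 0 := by
    by_contra! h
    exact hp (ext h)
  obtain ⟨y, hy⟩ := exists_units_eval_ne_zero hi (hcoeff i)
  have hmap : p.map (evalRingHom (y : K)) ≠ 0 := fun h0 => hy <| by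
    simpa only [coeff_map, coe_evalRingHom, coeff_zero] using congr_arg (coeff · i) h0
  exact ⟨y, (card_units_le_natDegree_add_card_eval_ne_zero hmap).trans
    (Nat.add_le_add_right natDegree_map_le _)⟩

end Polynomial

section Laurent

variable {K : Type} [Field K]

theorem laurentEval_eq_linearCombination {r : ℕ} (f : (Fin r → ℤ) →₀ K) (P : Fin r → Kˣ) :
    laurentEval f P = Finsupp.linearCombination K (fun u => ∏ i, ((P i ^ u i : Kˣ) : K)) f := by
  simp only [laurentEval, Finsupp.linearCombination_apply, Finsupp.sum, smul_eq_mul]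

theorem laurentEval_zero {r : ℕ} (P : Fin r → Kˣ) :
    laurentEval (0 : (Fin r → ℤ) →₀ K) P = 0 := by
  rw [laurentEval_eq_linearCombination, map_zero]

theorem laurentEval_sub {r : ℕ} (f g : (Fin r → ℤ) →₀ K) (P : Fin r → Kˣ) :
    laurentEval (f - g) P = laurentEval f P - laurentEval g P := by
  simp only [laurentEval_eq_linearCombination, map_sub]

/-- The outer variable is `x = P 0` and the coefficients are polynomials in `y = P 1`. Negative
exponents are truncated by `Int.toNat`, so this is only meaningful when `h` is supported in `ℕ²`. -/
noncomputable def toBivariate (h : (Fin 2 → ℤ) →₀ K) : K[X][X] :=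
  h.sum fun u c => monomial (u 0).toNat (monomial (u 1).toNat c)

theorem laurentEval_eq_eval_map_toBivariate {h : (Fin 2 → ℤ) →₀ K}
    (hh : ∀ u ∈ h.support, ∀ i, 0 ≤ u i) (x y : Kˣ) :
    laurentEval h ![x, y] = ((toBivariate h).map (evalRingHom (y : K))).eval (x : K) := by
  rw [laurentEval, toBivariate, Finsupp.sum, Polynomial.map_sum, eval_finsetSum]
  refine sum_congr rfl fun u hu => ?_
  have hu0 := hh u hu
  simp only [Fin.prod_univ_two, Matrix.cons_val_zero, Matrix.cons_val_one, map_monomial,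
    coe_evalRingHom, eval_monomial, Units.val_zpow_eq_pow_toNat _ (hu0 0),
    Units.val_zpow_eq_pow_toNat _ (hu0 1)]
  ring

theorem natDegree_toBivariate_le {h : (Fin 2 → ℤ) →₀ K} {d : ℕ} (hh : ∀ u ∈ h.support, u 0 ≤ d) :
    (toBivariate h).natDegree ≤ d :=
  natDegree_sum_le_of_forall_le _ _ fun u hu =>
    (natDegree_monomial_le _).trans (by have := hh u hu; omega)

theorem natDegree_coeff_toBivariate_le {h : (Fin 2 → ℤ) →₀ K} {e : ℕ}
    (hh : ∀ u ∈ h.support, u 1 ≤ e) (i : ℕ) : ((toBivariate h).coeff i).natDegree ≤ e := by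
  rw [toBivariate, Finsupp.sum, finsetSum_coeff]
  refine natDegree_sum_le_of_forall_le _ _ fun u hu => ?_
  rw [coeff_monomial]
  split_ifs
  · exact (natDegree_monomial_le _).trans (by have := hh u hu; omega)
  · simp

theorem coeff_coeff_toBivariate {h : (Fin 2 → ℤ) →₀ K} (hh : ∀ u ∈ h.support, ∀ i, 0 ≤ u i)
    {u : Fin 2 → ℤ} (hu : ∀ i, 0 ≤ u i) :
    ((toBivariate h).coeff (u 0).toNat).coeff (u 1).toNat = h u := by
  rw [toBivariate, Finsupp.sum, finsetSum_coeff, finsetSum_coeff]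
  simp only [coeff_monomial, apply_ite (coeff · (u 1).toNat), coeff_zero]
  rw [sum_eq_single u]
  · simp
  · intro v hv hvu
    have hv0 := hh v hv
    split_ifs with h0 h1
    · exact absurd (funext <| Fin.forall_fin_two.2
        ⟨by have := hv0 0; have := hu 0; omega, by have := hv0 1; have := hu 1; omega⟩) hvu
    all_goals rfl
  · intro hu'
    simp only [Finsupp.notMem_support_iff.1 hu', ite_self]

theorem toBivariate_ne_zero {h : (Fin 2 → ℤ) →₀ K} (hh : ∀ u ∈ h.support, ∀ i, 0 ≤ u i)
    (h0 : h ≠ 0) : toBivariate h ≠ 0 := by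
  obtain ⟨u, hu⟩ := Finsupp.support_nonempty_iff.2 h0
  intro h1
  have hcoeff := coeff_coeff_toBivariate hh (hh u hu)
  rw [h1, coeff_zero, coeff_zero] at hcoeff
  exact Finsupp.mem_support_iff.1 hu hcoeff.symm

end Laurent

section Counting

variable {K : Type} [Field K] [Fintype K] [DecidableEq K]

theorem card_units_le_add_card_laurentEval_ne_zero {h : (Fin 2 → ℤ) →₀ K} (h0 : h ≠ 0) {d e : ℕ}
    (hh : ↑h.support ⊆ Set.Icc (0 : Fin 2 → ℤ) ![(d : ℤ), e]) (he : e < Fintype.card Kˣ) :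
    Fintype.card Kˣ ≤ d + #{P : Fin 2 → Kˣ | laurentEval h P ≠ 0} := by
  have hnonneg : ∀ u ∈ h.support, ∀ i, 0 ≤ u i := fun u hu => (hh hu).1
  obtain ⟨y, hy⟩ := exists_units_card_le_natDegree_add_card_eval_map_ne_zero
    (toBivariate_ne_zero hnonneg h0) fun i =>
      (natDegree_coeff_toBivariate_le (fun u hu => (hh hu).2 1) i).trans_lt he
  refine hy.trans (Nat.add_le_add (natDegree_toBivariate_le fun u hu => (hh hu).2 0) ?_)
  refine card_le_card_of_injOn (fun x => ![x, y]) (fun x hx => ?_) fun x _ x' _ hxx' => ?_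
  · simpa [laurentEval_eq_eval_map_toBivariate hnonneg] using hx
  · simpa using congr_fun hxx' 0

theorem eq_zero_of_forall_mem_laurentEval_eq_zero {h : (Fin 2 → ℤ) →₀ K} {d e : ℕ}
    (hh : ↑h.support ⊆ Set.Icc (0 : Fin 2 → ℤ) ![(d : ℤ), e]) (he : e < Fintype.card Kˣ)
    {A : Finset (Fin 2 → Kˣ)} (hA : ∀ P ∈ A, laurentEval h P = 0)
    (hcard : Fintype.card Kˣ ^ 2 + d < #A + Fintype.card Kˣ) : h = 0 := by
  by_contra h0
  have hle := card_units_le_add_card_laurentEval_ne_zero h0 hh he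
  set S : Finset (Fin 2 → Kˣ) := {P | laurentEval h P ≠ 0}
  have hdisj : Disjoint S A := disjoint_left.2 fun P hS hPA => (mem_filter.1 hS).2 (hA P hPA)
  have hunion := card_le_univ (S ∪ A)
  rw [card_union_of_disjoint hdisj, Fintype.card_fun, Fintype.card_fin] at hunion
  omega

end Counting

theorem trapezoid_subset_Icc {a b m : ℤ} (hm : 0 < m) (hba : b ≤ a) :
    {u : Fin 2 → ℤ | 0 ≤ u 1 ∧ u 1 ≤ m ∧ 0 ≤ u 0 ∧ m * u 0 ≤ a * m + (b - a) * u 1} ⊆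
      Set.Icc 0 ![a, m] := by
  rintro u ⟨hu1, hu1m, hu0, hineq⟩
  have hu0a : u 0 ≤ a := le_of_mul_le_mul_left (by nlinarith) hm
  exact ⟨Fin.forall_fin_two.2 ⟨hu0, hu1⟩, Fin.forall_fin_two.2 ⟨hu0a, hu1m⟩⟩

theorem stmt13_general {K : Type} [Field K] [Fintype K]
    (q : ℕ) (hq : Fintype.card K = q) (hq3 : 3 ≤ q)
    (a b : ℤ) (hb : 0 ≤ b) (hba : b ≤ a)
    (U : Set (Fin 2 → ℤ))
    (hU : U = {u : Fin 2 → ℤ | 0 ≤ u 1 ∧ u 1 ≤ (q : ℤ) - 2 ∧ 0 ≤ u 0 ∧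
        ((q : ℤ) - 2) * u 0 ≤ a * ((q : ℤ) - 2) + (b - a) * u 1})
    (P₀ : Fin 2 → Kˣ) (A : Finset (Fin 2 → Kˣ))
    (hA : ((q : ℤ) - 1) ^ 2 - ((q : ℤ) - 1 - a) + 1 ≤ (A.card : ℤ))
    (f g : (Fin 2 → ℤ) →₀ K) (hf : ↑f.support ⊆ U) (hg : ↑g.support ⊆ U)
    (hfg : ∀ P ∈ A, laurentEval f P = laurentEval g P) :
    laurentEval f P₀ = laurentEval g P₀ := by
  classical
  lift a to ℕ using hb.trans hba
  obtain ⟨m, rfl⟩ : ∃ m, q = m + 2 := ⟨q - 2, by omega⟩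
  have hunits : Fintype.card Kˣ = m + 1 := by rw [Fintype.card_units, hq]; rfl
  have hUbox : U ⊆ Set.Icc 0 ![(a : ℤ), m] := by
    rw [hU]
    push_cast
    simpa only [add_sub_cancel_right] using trapezoid_subset_Icc (by omega) hba
  have hbox : ↑(f - g).support ⊆ Set.Icc 0 ![(a : ℤ), m] := fun u hu =>
    (mem_union.1 (Finsupp.support_sub hu)).elim (fun h => hUbox (hf h)) fun h => hUbox (hg h)
  have hcard : Fintype.card Kˣ ^ 2 + a < #A + Fintype.card Kˣ := by
    rw [hunits]
    push_cast at hA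
    zify
    linarith
  have hfg0 : f - g = 0 := eq_zero_of_forall_mem_laurentEval_eq_zero hbox (by omega)
    (fun P hP => by rw [laurentEval_sub, hfg P hP, sub_self]) hcard
  rw [← sub_eq_zero, ← laurentEval_sub, hfg0, laurentEval_zero]

/-- reconstruction threshold on the toric surface: for `U` the
lattice points of the polytope with vertices `(0,0), (a,0), (b,q−2), (0,q−2)`
(`0 ≤ b ≤ a ≤ q−2`), any `(q−1)² − (q−1−a) + 1` shares determine the secret. -/
theorem stmt13 {K : Type} [Field K] [Fintype K]
    (q : ℕ) (hq : Fintype.card K = q) (hq3 : 3 ≤ q)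
    (a b : ℤ) (hb : 0 ≤ b) (hba : b ≤ a) (ha : a ≤ (q : ℤ) - 2)
    (U : Set (Fin 2 → ℤ))
    (hU : U = {u : Fin 2 → ℤ | 0 ≤ u 1 ∧ u 1 ≤ (q : ℤ) - 2 ∧ 0 ≤ u 0 ∧
        ((q : ℤ) - 2) * u 0 ≤ a * ((q : ℤ) - 2) + (b - a) * u 1})
    (P₀ : Fin 2 → Kˣ) (A : Finset (Fin 2 → Kˣ)) (hP₀ : P₀ ∉ A)
    (hA : ((q : ℤ) - 1) ^ 2 - ((q : ℤ) - 1 - a) + 1 ≤ (A.card : ℤ))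
    (f g : (Fin 2 → ℤ) →₀ K) (hf : ↑f.support ⊆ U) (hg : ↑g.support ⊆ U)
    (hfg : ∀ P ∈ A, laurentEval f P = laurentEval g P) :
    laurentEval f P₀ = laurentEval g P₀ :=
  stmt13_general q hq hq3 a b hb hba U hU P₀ A hA f g hf hg hfg
end

section
/- (Privacy threshold on the toric surface.) Let a, b be integers with 0 ≤ b ≤ a ≤ q−2 and q ≥ 3, and let U = {(i,j) ∈ ℤ² : 0 ≤ j ≤ q−2, 0 ≤ i, and (q−2)·i ≤ a(q−2) + (b−a)·j}. Fix P_0 ∈ (𝔽_q^*)² and let A ⊆ (𝔽_q^*)² ∖ {P_0} with |A| ≤ b − 1. Then for every f ∈ 𝔽_q<U> and every s ∈ 𝔽_q there exists g ∈ 𝔽_q<U> with g(P) = f(P) for all P ∈ A and g(P_0) = s; i.e., the privacy threshold of the scheme M(U) is at least b − 1. -/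
open scoped BigOperators

/-! For every `Q ∈ A` pick a coordinate `k` in which `Q` differs from `P₀`; the product of the
linear forms `X_k - Q_k` is a polynomial of degree at most `|A| ≤ b - 1` vanishing on `A` but
not at `P₀`. Its exponents lie in the lattice simplex of degree `b - 1`, which is contained in
the trapezoid `U`, so adding a suitable multiple of it to `f` moves the value at `P₀` to `s`
without changing the shares of `A`. -/

open Finsupp MvPolynomial

theorem exists_totalDegree_le_eval_eq_zero {R σ ι : Type*} [CommRing R] [IsDomain R] [Fintype ι]
    (x : ι → σ → R) (x₀ : σ → R) (hx : ∀ i, x i ≠ x₀) :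
    ∃ p : MvPolynomial σ R, p.totalDegree ≤ Fintype.card ι ∧
      (∀ i, eval (x i) p = 0) ∧ eval x₀ p ≠ 0 := by
  choose k hk using fun i => Function.ne_iff.mp (hx i)
  refine ⟨∏ i, (X (k i) - C (x i (k i))), ?_, fun i => ?_, ?_⟩
  · calc (∏ i, (X (k i) - C (x i (k i)))).totalDegree
        ≤ ∑ i, (X (k i) - C (x i (k i)) : MvPolynomial σ R).totalDegree :=
          totalDegree_finsetProd _ _
      _ ≤ ∑ _i : ι, 1 :=
          Finset.sum_le_sum fun _ _ => (totalDegree_sub_C_le _ _).trans (totalDegree_X _).le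
      _ = Fintype.card ι := by simp
  · simpa [map_prod] using Finset.prod_eq_zero (Finset.mem_univ i) (by simp)
  · simpa [map_prod, Finset.prod_ne_zero_iff, sub_eq_zero] using fun i => (hk i).symm

section Laurent

variable {K : Type} [Field K] {r : ℕ}

noncomputable def torusMonomial (P : Fin r → Kˣ) (u : Fin r → ℤ) : K :=
  ∏ i, ((P i ^ u i : Kˣ) : K)

theorem laurentEval_eq_linearCombination_s14 (f : (Fin r → ℤ) →₀ K) (P : Fin r → Kˣ) :
    laurentEval f P = linearCombination K (torusMonomial P) f := by
  simp only [laurentEval, linearCombination_apply, Finsupp.sum, torusMonomial, smul_eq_mul]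

theorem laurentEval_add_smul (f h : (Fin r → ℤ) →₀ K) (c : K) (P : Fin r → Kˣ) :
    laurentEval (f + c • h) P = laurentEval f P + c * laurentEval h P := by
  simp only [laurentEval_eq_linearCombination_s14, map_add, map_smul, smul_eq_mul]

theorem exists_laurentEval_eq_of_separating {U : Set (Fin r → ℤ)} {A : Finset (Fin r → Kˣ)}
    {P₀ : Fin r → Kˣ} {f h : (Fin r → ℤ) →₀ K} (hf : ↑f.support ⊆ U)
    (hh : ↑h.support ⊆ U)
    (hA : ∀ P ∈ A, laurentEval h P = 0) (hP₀ : laurentEval h P₀ ≠ 0) (s : K) :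
    ∃ g : (Fin r → ℤ) →₀ K, ↑g.support ⊆ U ∧
      (∀ P ∈ A, laurentEval g P = laurentEval f P) ∧ laurentEval g P₀ = s := by
  classical
  refine ⟨f + ((s - laurentEval f P₀) / laurentEval h P₀) • h, fun u hu => ?_,
    fun P hP => ?_, ?_⟩
  · rcases Finset.mem_union.mp (support_add hu) with hu | hu
    exacts [hf hu, hh (support_smul hu)]
  · rw [laurentEval_add_smul, hA P hP, mul_zero, add_zero]
  · rw [laurentEval_add_smul, div_mul_cancel₀ _ hP₀, add_sub_cancel]

def latticeSimplex (r : ℕ) (d : ℤ) : Set (Fin r → ℤ) :=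
  {u | 0 ≤ u ∧ ∑ i, u i ≤ d}

theorem latticeSimplex_mono {d e : ℤ} (hde : d ≤ e) :
    latticeSimplex r d ⊆ latticeSimplex r e :=
  fun _ ⟨hu, hsum⟩ => ⟨hu, hsum.trans hde⟩

def natExponent : (Fin r →₀ ℕ) ↪ (Fin r → ℤ) where
  toFun d i := d i
  inj' _ _ h := Finsupp.ext fun i => Int.ofNat_inj.mp (congrFun h i)

@[simp]
theorem natExponent_apply (d : Fin r →₀ ℕ) (i : Fin r) : natExponent d i = d i := rfl

noncomputable def MvPolynomial.toLaurent (p : MvPolynomial (Fin r) K) : (Fin r → ℤ) →₀ K :=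
  embDomain natExponent (AddMonoidAlgebra.coeff p)

theorem laurentEval_toLaurent (p : MvPolynomial (Fin r) K) (P : Fin r → Kˣ) :
    laurentEval p.toLaurent P = eval (fun i => (P i : K)) p := by
  rw [laurentEval, toLaurent, support_embDomain, Finset.sum_map, eval_eq']
  refine Finset.sum_congr rfl fun d _ => ?_
  simp [embDomain_apply_self, MvPolynomial.coeff]

theorem support_toLaurent_subset (p : MvPolynomial (Fin r) K) :
    ↑p.toLaurent.support ⊆ latticeSimplex r p.totalDegree := by
  intro u hu
  rw [toLaurent, support_embDomain, Finset.coe_map] at hu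
  obtain ⟨d, hd, rfl⟩ := hu
  refine ⟨fun i => Int.natCast_nonneg (d i), ?_⟩
  have := le_totalDegree (s := d) hd
  rw [Finsupp.sum_fintype _ _ fun _ => rfl] at this
  simpa using (Nat.cast_le (α := ℤ)).mpr this

theorem exists_laurent_vanishing_on (A : Finset (Fin r → Kˣ)) {P₀ : Fin r → Kˣ}
    (hP₀ : P₀ ∉ A) :
    ∃ h : (Fin r → ℤ) →₀ K, ↑h.support ⊆ latticeSimplex r A.card ∧
      (∀ P ∈ A, laurentEval h P = 0) ∧ laurentEval h P₀ ≠ 0 := by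
  have hne : ∀ P : A, (fun i => (P.1 i : K)) ≠ fun i => (P₀ i : K) := fun P hP =>
    hP₀ (by convert P.2; exact funext fun i => Units.ext (congrFun hP i).symm)
  obtain ⟨p, hdeg, hA, hP₀⟩ := exists_totalDegree_le_eval_eq_zero _ _ hne
  refine ⟨p.toLaurent, (support_toLaurent_subset p).trans (latticeSimplex_mono ?_),
    fun P hP => ?_, ?_⟩
  · simpa using hdeg
  · simpa [laurentEval_toLaurent] using hA ⟨P, hP⟩
  · simpa [laurentEval_toLaurent] using hP₀

end Laurent

theorem latticeSimplex_subset_trapezoid {n a b : ℤ} (hba : b ≤ a) (ha : a ≤ n) :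
    latticeSimplex 2 (b - 1) ⊆
      {u | 0 ≤ u 1 ∧ u 1 ≤ n ∧ 0 ≤ u 0 ∧ n * u 0 ≤ a * n + (b - a) * u 1} := by
  rintro u ⟨hu, hsum⟩
  have hu0 : 0 ≤ u 0 := hu 0
  have hu1 : 0 ≤ u 1 := hu 1
  rw [Fin.sum_univ_two] at hsum
  refine ⟨hu1, by omega, hu0, ?_⟩
  -- `n u₀ ≤ n (b - 1 - u₁)`, and `n (b - 1 - a) ≤ 0 ≤ (n - a + b) u₁`
  nlinarith [mul_nonneg (by omega : 0 ≤ n) (by omega : 0 ≤ b - 1 - u 0 - u 1),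
    mul_nonneg (by omega : 0 ≤ n) (by omega : 0 ≤ a + 1 - b),
    mul_nonneg hu1 (by omega : 0 ≤ n - a + b)]

theorem stmt14_general {K : Type} [Field K]
    (q : ℕ) (a b : ℤ) (hba : b ≤ a) (ha : a ≤ (q : ℤ) - 2)
    (U : Set (Fin 2 → ℤ))
    (hU : U = {u : Fin 2 → ℤ | 0 ≤ u 1 ∧ u 1 ≤ (q : ℤ) - 2 ∧ 0 ≤ u 0 ∧
        ((q : ℤ) - 2) * u 0 ≤ a * ((q : ℤ) - 2) + (b - a) * u 1})
    (P₀ : Fin 2 → Kˣ) (A : Finset (Fin 2 → Kˣ)) (hP₀ : P₀ ∉ A)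
    (hA : (A.card : ℤ) ≤ b - 1)
    (f : (Fin 2 → ℤ) →₀ K) (hf : ↑f.support ⊆ U) (s : K) :
    ∃ g : (Fin 2 → ℤ) →₀ K, ↑g.support ⊆ U ∧
      (∀ P ∈ A, laurentEval g P = laurentEval f P) ∧ laurentEval g P₀ = s := by
  obtain ⟨h, hsupp, hvanish, hP₀⟩ := exists_laurent_vanishing_on A hP₀
  refine exists_laurentEval_eq_of_separating hf ?_ hvanish hP₀ s
  rw [hU]
  exact hsupp.trans ((latticeSimplex_mono hA).trans (latticeSimplex_subset_trapezoid hba ha))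

/-- privacy threshold on the toric surface: for `U` the lattice
points of the polytope with vertices `(0,0), (a,0), (b,q−2), (0,q−2)`
(`0 ≤ b ≤ a ≤ q−2`), any `b − 1` shares reveal nothing about the secret. -/
theorem stmt14 {K : Type} [Field K] [Fintype K]
    (q : ℕ) (hq : Fintype.card K = q) (hq3 : 3 ≤ q)
    (a b : ℤ) (hb : 0 ≤ b) (hba : b ≤ a) (ha : a ≤ (q : ℤ) - 2)
    (U : Set (Fin 2 → ℤ))
    (hU : U = {u : Fin 2 → ℤ | 0 ≤ u 1 ∧ u 1 ≤ (q : ℤ) - 2 ∧ 0 ≤ u 0 ∧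
        ((q : ℤ) - 2) * u 0 ≤ a * ((q : ℤ) - 2) + (b - a) * u 1})
    (P₀ : Fin 2 → Kˣ) (A : Finset (Fin 2 → Kˣ)) (hP₀ : P₀ ∉ A)
    (hA : (A.card : ℤ) ≤ b - 1)
    (f : (Fin 2 → ℤ) →₀ K) (hf : ↑f.support ⊆ U) (s : K) :
    ∃ g : (Fin 2 → ℤ) →₀ K, ↑g.support ⊆ U ∧
      (∀ P ∈ A, laurentEval g P = laurentEval f P) ∧ laurentEval g P₀ = s :=
  stmt14_general q a b hba ha U hU P₀ A hP₀ hA f hf s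
end

section
/- (Strong multiplication on the toric surface.) Let a, b be integers with 0 ≤ b ≤ a ≤ q−2, q ≥ 3 and 2a ≤ q−2, and let U = {(i,j) ∈ ℤ² : 0 ≤ j ≤ q−2, 0 ≤ i, and (q−2)·i ≤ a(q−2) + (b−a)·j}. Let t be a natural number with t ≤ min{b−1, (q−2−2a)−1}. Fix P_0 ∈ (𝔽_q^*)², let A ⊆ (𝔽_q^*)² ∖ {P_0} with |A| ≤ t, and set B = (𝔽_q^*)² ∖ ({P_0} ∪ A). Then: (1) for every f ∈ 𝔽_q<U> and every s ∈ 𝔽_q there exists g ∈ 𝔽_q<U> with g(P) = f(P) for all P ∈ A and g(P_0) = s; and (2) for all f, g, f', g' ∈ 𝔽_q<U> with f(P)·g(P) = f'(P)·g'(P) for every P ∈ B, one has f(P_0)·g(P_0) = f'(P_0)·g'(P_0). That is, the scheme M(U) has t-strong multiplication with respect to the threshold adversary structure A_{t,n}, n = (q−1)² − 1. -/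
/-!
Privacy: for every point `Q` of `T = {P₀} ∪ A` the product of the linear forms `X - x` over
the other points of `T` in the row of `Q` and of the forms `Y - y` over all rows `y ≠ Q 1`
lies in `𝔽_q<U>`, since its `X`-degree is at most `t < b` and its `Y`-degree at most `q - 2`.
It vanishes on `T ∖ {Q}` but not at `Q`, so these elements interpolate any values on `T`.

Strong multiplication: every element of `𝔽_q<U>` has `X`-degree at most `a`, so on each row
`f g - f' g'` restricts to a polynomial in `X` of degree at most `2a`. It vanishes at the
`q - 1` points of the row outside `T`, and `2a + t + 1 < q - 1`, so it vanishes identically.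
-/

open scoped BigOperators

open Polynomial Finset
open scoped Pointwise

theorem AddMonoidAlgebra.mul_mem_supported {R M : Type*} [Semiring R] [Add M]
    {s t : Set M} {x y : AddMonoidAlgebra R M} (hx : x ∈ supported R R s)
    (hy : y ∈ supported R R t) : x * y ∈ supported R R (s + t) := by
  classical
  rw [mem_supported] at hx hy ⊢
  refine (Finset.coe_subset.mpr (support_coeff_mul_subset x y)).trans ?_
  rw [Finset.coe_add]
  exact Set.add_subset_add hx hy

theorem Polynomial.eq_zero_of_natDegree_add_card_lt {R : Type*} [CommRing R] [IsDomain R]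
    [DecidableEq R] (p : R[X]) (s S : Finset R) (hp : ∀ x ∈ s, x ∉ S → p.eval x = 0)
    (hcard : p.natDegree + #S < #s) : p = 0 :=
  eq_zero_of_natDegree_lt_card_of_eval_eq_zero' p (s \ S)
    (fun x hx => hp x (mem_sdiff.mp hx).1 (mem_sdiff.mp hx).2)
    (by have := le_card_sdiff S s; omega)

variable {K : Type} [Field K] {r : ℕ}

noncomputable def laurentEvalHom (P : Fin r → Kˣ) : AddMonoidAlgebra K (Fin r → ℤ) →ₐ[K] K :=
  AddMonoidAlgebra.lift K K (Fin r → ℤ) ((Units.coeHom K).comp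
    { toFun := fun u => ∏ i, P i ^ u.toAdd i
      map_one' := by simp
      map_mul' := fun u v => by simp [zpow_add, prod_mul_distrib] })

theorem laurentEvalHom_single (P : Fin r → Kˣ) (u : Fin r → ℤ) (c : K) :
    laurentEvalHom P (.single u c) = c * ∏ i, ((P i ^ u i : Kˣ) : K) := by
  simp [laurentEvalHom, smul_eq_mul]

theorem laurentEvalHom_ofCoeff (P : Fin r → Kˣ) (f : (Fin r → ℤ) →₀ K) :
    laurentEvalHom P (.ofCoeff f) = laurentEval f P := by
  rw [laurentEvalHom, AddMonoidAlgebra.lift_apply, laurentEval, Finsupp.sum]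
  simp [smul_eq_mul]

noncomputable def linearFactorProd (i : Fin r) (S : Finset Kˣ) :
    AddMonoidAlgebra K (Fin r → ℤ) :=
  ∏ x ∈ S, (.single (Pi.single i 1) 1 - .single 0 (x : K))

theorem laurentEvalHom_linearFactorProd (P : Fin r → Kˣ) (i : Fin r) (S : Finset Kˣ) :
    laurentEvalHom P (linearFactorProd i S) = ∏ x ∈ S, ((P i : K) - x) := by
  simp [linearFactorProd, laurentEvalHom_single, Pi.single_apply, apply_ite Units.val]

theorem linearFactorProd_mem_supported (i : Fin r) (S : Finset Kˣ) :
    linearFactorProd i S ∈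
      AddMonoidAlgebra.supported K K (Set.Icc 0 (Pi.single i (#S : ℤ) : Fin r → ℤ)) := by
  classical
  induction S using Finset.induction_on with
  | empty =>
    simp only [linearFactorProd, prod_empty, card_empty, Nat.cast_zero, Pi.single_zero,
      Set.Icc_self, AddMonoidAlgebra.mem_supported]
    exact_mod_cast AddMonoidAlgebra.support_coeff_one_subset
  | insert x S hx ih =>
    have hsingle (u : Fin r → ℤ) (hu : u ∈ Set.Icc 0 (Pi.single i 1)) (c : K) :
        AddMonoidAlgebra.single u c ∈ AddMonoidAlgebra.supported K K (Set.Icc 0 (Pi.single i 1)) :=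
      fun v hv => by rwa [Finset.mem_singleton.mp (Finsupp.support_single_subset hv)]
    have hfactor := sub_mem (hsingle (Pi.single i 1) ⟨by simp, le_rfl⟩ 1)
      (hsingle 0 ⟨le_rfl, by simp⟩ x)
    rw [linearFactorProd, prod_insert hx, card_insert_of_notMem hx]
    refine AddMonoidAlgebra.supported_mono ?_ (AddMonoidAlgebra.mul_mem_supported hfactor ih)
    refine (Set.Icc_add_Icc_subset _ _ _ _).trans_eq ?_
    rw [add_zero, ← Pi.single_add]
    push_cast
    ring_nf

theorem exists_laurentEvalHom_ne_zero_eq_zero_on [Fintype K] {T : Finset (Fin 2 → Kˣ)}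
    {Q : Fin 2 → Kˣ} (hQ : Q ∈ T) :
    ∃ h ∈ AddMonoidAlgebra.supported K K
        (Set.Icc 0 ![(#T : ℤ) - 1, Fintype.card K - 2]),
      laurentEvalHom Q h ≠ 0 ∧ ∀ R ∈ T, R ≠ Q → laurentEvalHom R h = 0 := by
  classical
  set S := ((T.erase Q).filter (· 1 = Q 1)).image (· 0)
  have hQS : Q 0 ∉ S := by
    simp only [S, mem_image, mem_filter, mem_erase, not_exists, not_and]
    intro R ⟨⟨hRQ, _⟩, h1⟩ h0
    exact hRQ (funext fun j => by fin_cases j <;> assumption)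
  have hS : #S ≤ #T - 1 :=
    card_image_le.trans ((card_filter_le _ _).trans_eq (card_erase_of_mem hQ))
  refine ⟨linearFactorProd 0 S * linearFactorProd 1 (univ.erase (Q 1)), ?_, ?_, ?_⟩
  · refine AddMonoidAlgebra.supported_mono ?_ (AddMonoidAlgebra.mul_mem_supported
      (linearFactorProd_mem_supported 0 S) (linearFactorProd_mem_supported 1 _))
    refine (Set.Icc_add_Icc_subset _ _ _ _).trans (Set.Icc_subset_Icc le_rfl ?_)
    have hT : 1 ≤ #T := card_pos.mpr ⟨Q, hQ⟩
    have hK : 2 ≤ Fintype.card K := Fintype.one_lt_card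
    intro j
    fin_cases j <;> simp [Fintype.card_units] <;> omega
  · rw [map_mul, laurentEvalHom_linearFactorProd, laurentEvalHom_linearFactorProd]
    refine mul_ne_zero (prod_ne_zero_iff.mpr fun x hx => ?_) (prod_ne_zero_iff.mpr fun y hy => ?_)
    · exact sub_ne_zero.mpr (Units.val_injective.ne (ne_of_mem_of_not_mem hx hQS).symm)
    · exact sub_ne_zero.mpr (Units.val_injective.ne (ne_of_mem_erase hy).symm)
  · intro R hR hRQ
    rw [map_mul, laurentEvalHom_linearFactorProd, laurentEvalHom_linearFactorProd, mul_eq_zero]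
    by_cases h1 : R 1 = Q 1
    · refine .inl (prod_eq_zero (mem_image_of_mem _ ?_) (sub_self _))
      exact mem_filter.mpr ⟨mem_erase.mpr ⟨hRQ, hR⟩, h1⟩
    · exact .inr (prod_eq_zero (mem_erase.mpr ⟨h1, mem_univ _⟩) (sub_self _))

theorem exists_laurentEval_eq_on [Fintype K] (T : Finset (Fin 2 → Kˣ))
    (v : (Fin 2 → Kˣ) → K) :
    ∃ g : (Fin 2 → ℤ) →₀ K, ↑g.support ⊆ Set.Icc 0 ![(#T : ℤ) - 1, Fintype.card K - 2] ∧
      ∀ R ∈ T, laurentEval g R = v R := by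
  classical
  choose! h hsupp hne hzero using fun Q (hQ : Q ∈ T) => exists_laurentEvalHom_ne_zero_eq_zero_on hQ
  set g := ∑ Q ∈ T, (v Q / laurentEvalHom Q (h Q)) • h Q
  refine ⟨g.coeff, sum_mem fun Q hQ => Submodule.smul_mem _ _ (hsupp Q hQ), fun R hR => ?_⟩
  rw [← laurentEvalHom_ofCoeff, AddMonoidAlgebra.ofCoeff_coeff, map_sum,
    sum_eq_single_of_mem R hR fun Q hQ hQR => by rw [map_smul, hzero Q hQ R hR hQR.symm, smul_zero],
    map_smul, smul_eq_mul, div_mul_cancel₀ _ (hne R hR)]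

theorem exists_polynomial_eval_eq_laurentEval_update (f : (Fin r → ℤ) →₀ K) (i : Fin r)
    (d : ℕ) (hf : ∀ u ∈ f.support, u i ∈ Set.Icc 0 (d : ℤ)) (Q : Fin r → Kˣ) :
    ∃ p : K[X], p.natDegree ≤ d ∧
      ∀ x : Kˣ, p.eval (x : K) = laurentEval f (Function.update Q i x) := by
  classical
  refine ⟨∑ u ∈ f.support,
    C (f u * ∏ j ∈ univ.erase i, ((Q j ^ u j : Kˣ) : K)) * X ^ (u i).toNat, ?_, fun x => ?_⟩
  · refine natDegree_sum_le_of_forall_le _ _ fun u hu => (natDegree_C_mul_X_pow_le _ _).trans ?_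
    obtain ⟨-, hd⟩ := hf u hu
    omega
  · rw [eval_finsetSum, laurentEval]
    refine sum_congr rfl fun u hu => ?_
    have hrest : ∏ j ∈ univ.erase i, ((Function.update Q i x j ^ u j : Kˣ) : K) =
        ∏ j ∈ univ.erase i, ((Q j ^ u j : Kˣ) : K) :=
      prod_congr rfl fun j hj => by rw [Function.update_of_ne (ne_of_mem_erase hj)]
    rw [← mul_prod_erase _ _ (mem_univ i), Function.update_self, hrest,
      Units.val_zpow_eq_zpow_val, ← Int.toNat_of_nonneg (hf u hu).1, zpow_natCast]
    simp only [eval_mul, eval_C, eval_pow, eval_X, Int.toNat_natCast]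
    ring

theorem laurentEval_mul_eq_of_eq_off [Fintype K] {f g f' g' : (Fin r → ℤ) →₀ K} (i : Fin r)
    (d : ℕ) (hf : ∀ u ∈ f.support, u i ∈ Set.Icc 0 (d : ℤ))
    (hg : ∀ u ∈ g.support, u i ∈ Set.Icc 0 (d : ℤ))
    (hf' : ∀ u ∈ f'.support, u i ∈ Set.Icc 0 (d : ℤ))
    (hg' : ∀ u ∈ g'.support, u i ∈ Set.Icc 0 (d : ℤ))
    (T : Finset (Fin r → Kˣ)) (hT : 2 * d + #T + 1 < Fintype.card K)
    (hfg : ∀ P ∉ T, laurentEval f P * laurentEval g P = laurentEval f' P * laurentEval g' P)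
    (Q : Fin r → Kˣ) :
    laurentEval f Q * laurentEval g Q = laurentEval f' Q * laurentEval g' Q := by
  classical
  obtain ⟨p, hp, hpf⟩ := exists_polynomial_eval_eq_laurentEval_update f i d hf Q
  obtain ⟨p', hp', hpg⟩ := exists_polynomial_eval_eq_laurentEval_update g i d hg Q
  obtain ⟨q, hq, hqf⟩ := exists_polynomial_eval_eq_laurentEval_update f' i d hf' Q
  obtain ⟨q', hq', hqg⟩ := exists_polynomial_eval_eq_laurentEval_update g' i d hg' Q
  have hdeg : (p * p' - q * q').natDegree ≤ 2 * d :=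
    (natDegree_sub_le _ _).trans (max_le (natDegree_mul_le.trans (by omega))
      (natDegree_mul_le.trans (by omega)))
  have hzero : p * p' - q * q' = 0 := by
    refine eq_zero_of_natDegree_add_card_lt _ (univ.map ⟨Units.val, Units.val_injective⟩)
      (T.image fun P => (P i : K)) ?_ ?_
    · simp only [mem_map, mem_univ, true_and, Function.Embedding.coeFn_mk]
      rintro _ ⟨x, rfl⟩ hx
      have hxT : Function.update Q i x ∉ T := fun h =>
        hx (mem_image.mpr ⟨_, h, by rw [Function.update_self]⟩)
      rw [eval_sub, eval_mul, eval_mul, hpf, hpg, hqf, hqg, hfg _ hxT, sub_self]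
    · rw [card_map, card_univ, Fintype.card_units]
      have := card_image_le (s := T) (f := fun P => (P i : K))
      omega
  have := congrArg (eval (Q i : K)) hzero
  rw [eval_sub, eval_mul, eval_mul, eval_zero, sub_eq_zero, hpf, hpg, hqf, hqg,
    Function.update_eq_self] at this
  exact this

theorem stmt15_general {K : Type} [Field K] [Fintype K]
    (q : ℕ) (hq : Fintype.card K = q)
    (a b : ℤ) (hba : b ≤ a)
    (U : Set (Fin 2 → ℤ))
    (hU : U = {u : Fin 2 → ℤ | 0 ≤ u 1 ∧ u 1 ≤ (q : ℤ) - 2 ∧ 0 ≤ u 0 ∧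
        ((q : ℤ) - 2) * u 0 ≤ a * ((q : ℤ) - 2) + (b - a) * u 1})
    (t : ℕ) (ht : (t : ℤ) ≤ min (b - 1) (((q : ℤ) - 2 - 2 * a) - 1))
    (P₀ : Fin 2 → Kˣ) (A : Finset (Fin 2 → Kˣ)) (hP₀ : P₀ ∉ A)
    (hA : A.card ≤ t) :
    (∀ f : (Fin 2 → ℤ) →₀ K, ↑f.support ⊆ U → ∀ s : K,
      ∃ g : (Fin 2 → ℤ) →₀ K, ↑g.support ⊆ U ∧
        (∀ P ∈ A, laurentEval g P = laurentEval f P) ∧ laurentEval g P₀ = s) ∧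
    (∀ f g f' g' : (Fin 2 → ℤ) →₀ K,
      ↑f.support ⊆ U → ↑g.support ⊆ U → ↑f'.support ⊆ U → ↑g'.support ⊆ U →
      (∀ P : Fin 2 → Kˣ, P ≠ P₀ → P ∉ A →
        laurentEval f P * laurentEval g P = laurentEval f' P * laurentEval g' P) →
      laurentEval f P₀ * laurentEval g P₀ =
        laurentEval f' P₀ * laurentEval g' P₀) := by
  classical
  obtain ⟨htb, hta⟩ := le_min_iff.mp ht
  lift a to ℕ using by omega
  set T := insert P₀ A
  have hT : #T ≤ t + 1 := (card_insert_le _ _).trans (by omega)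
  have hboxU : Set.Icc 0 ![(#T : ℤ) - 1, Fintype.card K - 2] ⊆ U := by
    rintro u ⟨h0, h1⟩
    have hu0 : u 0 ≤ #T - 1 := h1 0
    have hu1 : u 1 ≤ Fintype.card K - 2 := h1 1
    rw [hU, ← hq]
    exact ⟨h0 1, hu1, h0 0, by nlinarith [h0 1]⟩
  have hUa : ∀ u ∈ U, u 0 ∈ Set.Icc 0 (a : ℤ) := by
    rw [hU]
    rintro u ⟨h1, -, h0, hle⟩
    exact ⟨h0, by nlinarith⟩
  constructor
  · intro f _ s
    obtain ⟨g, hgU, hg⟩ := exists_laurentEval_eq_on T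
      fun P => if P = P₀ then s else laurentEval f P
    refine ⟨g, hgU.trans hboxU, fun P hP => ?_, ?_⟩
    · simpa [ne_of_mem_of_not_mem hP hP₀] using hg P (mem_insert_of_mem hP)
    · simpa using hg P₀ (mem_insert_self _ _)
  · intro f g f' g' hf hg hf' hg' hfg
    refine laurentEval_mul_eq_of_eq_off 0 a (fun u hu => hUa u (hf hu)) (fun u hu => hUa u (hg hu))
      (fun u hu => hUa u (hf' hu)) (fun u hu => hUa u (hg' hu)) T (by omega)
      (fun P hP => hfg P (by rintro rfl; exact hP (mem_insert_self _ _))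
        fun h => hP (mem_insert_of_mem h)) P₀

/-- strong multiplication on the toric surface: for `U` the lattice
points of the polytope with vertices `(0,0), (a,0), (b,q−2), (0,q−2)`
(`0 ≤ b ≤ a ≤ q−2`, `2a ≤ q−2`) and `t ≤ min{b−1, (q−2−2a)−1}`, the scheme
`M(U)` has `t`-strong multiplication: (1) any `t` shares reveal nothing about the
secret, and (2) after removing any `t` shares, the products of the remaining
shares determine the product of the secrets. -/
theorem stmt15 {K : Type} [Field K] [Fintype K]
    (q : ℕ) (hq : Fintype.card K = q) (hq3 : 3 ≤ q)
    (a b : ℤ) (hb : 0 ≤ b) (hba : b ≤ a) (ha : a ≤ (q : ℤ) - 2)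
    (h2a : 2 * a ≤ (q : ℤ) - 2)
    (U : Set (Fin 2 → ℤ))
    (hU : U = {u : Fin 2 → ℤ | 0 ≤ u 1 ∧ u 1 ≤ (q : ℤ) - 2 ∧ 0 ≤ u 0 ∧
        ((q : ℤ) - 2) * u 0 ≤ a * ((q : ℤ) - 2) + (b - a) * u 1})
    (t : ℕ) (ht : (t : ℤ) ≤ min (b - 1) (((q : ℤ) - 2 - 2 * a) - 1))
    (P₀ : Fin 2 → Kˣ) (A : Finset (Fin 2 → Kˣ)) (hP₀ : P₀ ∉ A)
    (hA : A.card ≤ t) :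
    (∀ f : (Fin 2 → ℤ) →₀ K, ↑f.support ⊆ U → ∀ s : K,
      ∃ g : (Fin 2 → ℤ) →₀ K, ↑g.support ⊆ U ∧
        (∀ P ∈ A, laurentEval g P = laurentEval f P) ∧ laurentEval g P₀ = s) ∧
    (∀ f g f' g' : (Fin 2 → ℤ) →₀ K,
      ↑f.support ⊆ U → ↑g.support ⊆ U → ↑f'.support ⊆ U → ↑g'.support ⊆ U →
      (∀ P : Fin 2 → Kˣ, P ≠ P₀ → P ∉ A →
        laurentEval f P * laurentEval g P = laurentEval f' P * laurentEval g' P) →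
      laurentEval f P₀ * laurentEval g P₀ =
        laurentEval f' P₀ * laurentEval g' P₀) :=
  stmt15_general q hq a b hba U hU t ht P₀ A hP₀ hA
end
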